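/- arXiv:2307.01340 — 5 statements merged into one kernel-verified Lean document; each statement's English description precedes it below -/
import Mathlib

section
/- For every s ∈ {0,1,…,N}, every fixed c ∈ ℝᴺ, and all r, m ∈ {1,…,n}, the curve-s Stäckel Hamiltonians are in involution with respect to the canonical Poisson bracket: Σ_{i=1}^{n} ( ∂h_r^{(s)}/∂λ_i · ∂h_m^{(s)}/∂μ_i − ∂h_r^{(s)}/∂μ_i · ∂h_m^{(s)}/∂λ_i ) = 0 at every point (λ, μ) with λ ∈ Ω. -/
open Finset Function

noncomputable section

/-- Evaluation of a Laurent polynomial `p ∈ ℝ[λ,λ⁻¹]` at a real number `x`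
(meaningful for `x ≠ 0`, using `zpow`). -/
def leval (p : LaurentPolynomial ℝ) (x : ℝ) : ℝ :=
  Finsupp.sum p.coeff fun k a => a * x ^ k

/-- The open set `Ω ⊂ ℝⁿ` of tuples with nonzero, pairwise distinct entries. -/
def Omega (n : ℕ) : Set (Fin n → ℝ) :=
  {lam | (∀ i, lam i ≠ 0) ∧ Function.Injective lam}

/-- `H` is the family of curve-`s` Stäckel Hamiltonians: it satisfies, at every point of
`Ω × ℝⁿ × ℝᴺ`, the curve-`s` separation relations
`σ(λᵢ)λᵢ⁻ˢ + Σ_{k=s+1}^{N} c_k λᵢ^{n+k-s-1} + Σ_{q=1}^{n} h_q λᵢ^{n-q}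
  + Σ_{k=1}^{s} c_k λᵢ^{k-s-1} = f(λᵢ) λᵢˢ μᵢ²`.
Here everything is 0-based: `H lam mu c q` is `h_{q+1}`, `c j` is `c_{j+1}`,
`lam i` is `λ_{i+1}`.  (These relations determine `H` uniquely on `Ω × ℝⁿ × ℝᴺ`,
by invertibility of the Vandermonde matrix.) -/
def SepSol (n N : ℕ) (f σ : LaurentPolynomial ℝ) (s : ℕ)
    (H : (Fin n → ℝ) → (Fin n → ℝ) → (Fin N → ℝ) → Fin n → ℝ) : Prop :=
  ∀ lam ∈ Omega n, ∀ (mu : Fin n → ℝ) (c : Fin N → ℝ), ∀ i : Fin n,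
    leval σ (lam i) * lam i ^ (-(s : ℤ))
      + (∑ j : Fin N,
          if s ≤ (j : ℕ) then c j * lam i ^ ((n : ℤ) + (j : ℕ) - (s : ℕ))
          else c j * lam i ^ (((j : ℕ) : ℤ) - (s : ℕ)))
      + (∑ q : Fin n, H lam mu c q * lam i ^ ((n : ℤ) - 1 - (q : ℕ)))
      = leval f (lam i) * lam i ^ (s : ℤ) * mu i ^ 2

/-- Partial derivative `∂h_r/∂λ_p`. -/
def pLam {n N : ℕ} (H : (Fin n → ℝ) → (Fin n → ℝ) → (Fin N → ℝ) → Fin n → ℝ)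
    (lam mu : Fin n → ℝ) (c : Fin N → ℝ) (r p : Fin n) : ℝ :=
  deriv (fun t => H (Function.update lam p t) mu c r) (lam p)

/-- Partial derivative `∂h_r/∂μ_p`. -/
def pMu {n N : ℕ} (H : (Fin n → ℝ) → (Fin n → ℝ) → (Fin N → ℝ) → Fin n → ℝ)
    (lam mu : Fin n → ℝ) (c : Fin N → ℝ) (r p : Fin n) : ℝ :=
  deriv (fun t => H lam (Function.update mu p t) c r) (mu p)

/-!
Fix the point `(λ, μ)` and an index `p`. Moving only `λ_p` or only `μ_p` leaves every separation
relation with `i ≠ p` unchanged, so the change of the vector `h = (h_1, …, h_n)` is killed by all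
rows of the Vandermonde matrix `S(λ)` except the `p`-th one: it is a scalar multiple of the `p`-th
column of `S(λ)⁻¹`. Hence `(∂h_q/∂λ_p)_q` and `(∂h_q/∂μ_p)_q` are both multiples of that column,
and each summand `∂h_r/∂λ_p ∂h_m/∂μ_p − ∂h_r/∂μ_p ∂h_m/∂λ_p` of the bracket vanishes.
No differentiability of `h` is needed: the derivative of a scalar multiple of a fixed vector is
that multiple of the derivative, whether or not it exists.
-/

open Filter Topology Matrix Function

theorem Matrix.eq_add_mul_inv_apply_of_mulVec_apply_eq {K ι : Type*} [Field K] [Fintype ι]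
    [DecidableEq ι] {M : Matrix ι ι K} (hM : IsUnit M.det) {x y : ι → K} {p : ι}
    (h : ∀ i ≠ p, (M *ᵥ x) i = (M *ᵥ y) i) (q : ι) :
    x q = y q + (M *ᵥ (x - y)) p * M⁻¹ q p := by
  have hsingle : M *ᵥ (x - y) = Pi.single p ((M *ᵥ (x - y)) p) := by
    ext i
    rcases eq_or_ne i p with rfl | hi
    · simp
    · simp [mulVec_sub, h i hi, hi]
  have hxy : x - y = M⁻¹ *ᵥ (M *ᵥ (x - y)) := by
    rw [mulVec_mulVec, nonsing_inv_mul _ hM, one_mulVec]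
  have := congrFun hxy q
  rw [hsingle, mulVec_single] at this
  simp only [Pi.sub_apply, Pi.smul_apply, col_apply, op_smul_eq_mul] at this
  linear_combination this

theorem exists_deriv_eq_mul_inv_apply {𝕜 ι : Type*} [NontriviallyNormedField 𝕜] [Fintype ι]
    [DecidableEq ι] {M : Matrix ι ι 𝕜} (hM : IsUnit M.det) {Φ : 𝕜 → ι → 𝕜} {t₀ : 𝕜} {p : ι}
    (h : ∀ᶠ t in 𝓝 t₀, ∀ i ≠ p, (M *ᵥ Φ t) i = (M *ᵥ Φ t₀) i) :
    ∃ a, ∀ q, deriv (fun t => Φ t q) t₀ = a * M⁻¹ q p := by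
  set g : 𝕜 → 𝕜 := fun t => (M *ᵥ (Φ t - Φ t₀)) p
  refine ⟨deriv g t₀, fun q => ?_⟩
  have hΦ : (fun t => Φ t q) =ᶠ[𝓝 t₀] fun t => Φ t₀ q + g t * M⁻¹ q p :=
    h.mono fun t ht => Matrix.eq_add_mul_inv_apply_of_mulVec_apply_eq hM ht q
  rw [hΦ.deriv_eq, deriv_const_add, deriv_mul_const_field]

def sepMatrix {K : Type*} [Field K] (n : ℕ) (lam : Fin n → K) : Matrix (Fin n) (Fin n) K :=
  Matrix.of fun i q => lam i ^ ((n : ℤ) - 1 - (q : ℕ))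

theorem sepMatrix_eq_submatrix_vandermonde {K : Type*} [Field K] (n : ℕ) (lam : Fin n → K) :
    sepMatrix n lam = (vandermonde lam).submatrix id Fin.revPerm := by
  ext i q
  rw [sepMatrix, of_apply, submatrix_apply, vandermonde_apply, Fin.revPerm_apply, Fin.val_rev,
    id_eq, ← zpow_natCast]
  congr 1
  omega

theorem isUnit_det_sepMatrix {K : Type*} [Field K] {n : ℕ} {lam : Fin n → K}
    (hlam : Injective lam) : IsUnit (sepMatrix n lam).det := by
  rw [sepMatrix_eq_submatrix_vandermonde, det_permute']
  exact ((Units.isUnit _).map (Int.castRingHom K)).mul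
    (isUnit_iff_ne_zero.mpr (det_vandermonde_ne_zero_iff.mpr hlam))

theorem isOpen_omega (n : ℕ) : IsOpen (Omega n) := by
  have hOmega : Omega n =
      (⋂ i, {lam | lam i ≠ 0}) ∩ ⋂ (i) (j) (_ : i ≠ j), {lam | lam i ≠ lam j} := by
    ext lam
    simp [Omega, Injective, not_imp_not]
  rw [hOmega]
  exact (isOpen_iInter_of_finite fun i => isOpen_ne_fun (continuous_apply i) continuous_const).inter
    (isOpen_iInter_of_finite fun i => isOpen_iInter_of_finite fun j => isOpen_iInter_of_finite
      fun _ => isOpen_ne_fun (continuous_apply i) (continuous_apply j))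

section

variable {n N : ℕ} {f σ : LaurentPolynomial ℝ} {s : ℕ}
  {H : (Fin n → ℝ) → (Fin n → ℝ) → (Fin N → ℝ) → Fin n → ℝ}

theorem SepSol.sepMatrix_mulVec_apply_congr (hH : SepSol n N f σ s H)
    {lam lam' mu mu' : Fin n → ℝ} (hlam : lam ∈ Omega n) (hlam' : lam' ∈ Omega n)
    (c : Fin N → ℝ) {i : Fin n} (hi : lam' i = lam i) (hmu : mu' i = mu i) :
    (sepMatrix n lam *ᵥ H lam' mu' c) i = (sepMatrix n lam *ᵥ H lam mu c) i := by
  have h' := hH lam' hlam' mu' c i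
  have h := hH lam hlam mu c i
  rw [hi, hmu] at h'
  simp only [mulVec, dotProduct, sepMatrix, of_apply]
  simp only [mul_comm (H _ _ _ _)] at h h'
  linarith

theorem SepSol.exists_pLam_eq_mul_inv_apply (hH : SepSol n N f σ s H) {lam : Fin n → ℝ}
    (hlam : lam ∈ Omega n) (mu : Fin n → ℝ) (c : Fin N → ℝ) (p : Fin n) :
    ∃ a, ∀ q, pLam H lam mu c q p = a * (sepMatrix n lam)⁻¹ q p := by
  have hcont : Continuous fun t : ℝ => update lam p t := continuous_const.update p continuous_id
  have hupdate : ∀ᶠ t in 𝓝 (lam p), update lam p t ∈ Omega n :=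
    (hcont.tendsto' _ _ (update_eq_self p lam)).eventually ((isOpen_omega n).mem_nhds hlam)
  refine exists_deriv_eq_mul_inv_apply (Φ := fun t => H (update lam p t) mu c)
    (isUnit_det_sepMatrix hlam.2) ?_
  filter_upwards [hupdate] with t ht i hi
  rw [update_eq_self]
  exact hH.sepMatrix_mulVec_apply_congr hlam ht c (update_of_ne hi _ _) rfl

theorem SepSol.exists_pMu_eq_mul_inv_apply (hH : SepSol n N f σ s H) {lam : Fin n → ℝ}
    (hlam : lam ∈ Omega n) (mu : Fin n → ℝ) (c : Fin N → ℝ) (p : Fin n) :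
    ∃ b, ∀ q, pMu H lam mu c q p = b * (sepMatrix n lam)⁻¹ q p := by
  refine exists_deriv_eq_mul_inv_apply (Φ := fun t => H lam (update mu p t) c)
    (isUnit_det_sepMatrix hlam.2) (.of_forall fun t i hi => ?_)
  rw [update_eq_self]
  exact hH.sepMatrix_mulVec_apply_congr hlam hlam c rfl (update_of_ne hi _ _)

end

theorem stackel_hamiltonians_in_involution_general
    (n N : ℕ)
    (f σ : LaurentPolynomial ℝ) (s : ℕ)
    (H : (Fin n → ℝ) → (Fin n → ℝ) → (Fin N → ℝ) → Fin n → ℝ)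
    (hH : SepSol n N f σ s H)
    (lam : Fin n → ℝ) (hlam : lam ∈ Omega n) (mu : Fin n → ℝ) (c : Fin N → ℝ)
    (r m : Fin n) :
    ∑ i : Fin n,
      (pLam H lam mu c r i * pMu H lam mu c m i
        - pMu H lam mu c r i * pLam H lam mu c m i) = 0 := by
  refine Finset.sum_eq_zero fun p _ => ?_
  obtain ⟨a, ha⟩ := hH.exists_pLam_eq_mul_inv_apply hlam mu c p
  obtain ⟨b, hb⟩ := hH.exists_pMu_eq_mul_inv_apply hlam mu c p
  rw [ha, ha, hb, hb]
  ring

/-- for every `s ∈ {0,…,N}`, fixed `c`, and all `r, m ∈ {1,…,n}`, the curve-`s`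
Stäckel Hamiltonians are in involution w.r.t. the canonical Poisson bracket:
`Σᵢ (∂h_r^{(s)}/∂λᵢ ∂h_m^{(s)}/∂μᵢ - ∂h_r^{(s)}/∂μᵢ ∂h_m^{(s)}/∂λᵢ) = 0` on `Ω × ℝⁿ × ℝᴺ`. -/
theorem stackel_hamiltonians_in_involution
    (n N : ℕ) (hn : 1 ≤ n) (hN1 : 1 ≤ N) (hNn : N ≤ n)
    (f σ : LaurentPolynomial ℝ) (s : ℕ) (hsN : s ≤ N)
    (H : (Fin n → ℝ) → (Fin n → ℝ) → (Fin N → ℝ) → Fin n → ℝ)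
    (hH : SepSol n N f σ s H)
    (lam : Fin n → ℝ) (hlam : lam ∈ Omega n) (mu : Fin n → ℝ) (c : Fin N → ℝ)
    (r m : Fin n) :
    ∑ i : Fin n,
      (pLam H lam mu c r i * pMu H lam mu c m i
        - pMu H lam mu c r i * pLam H lam mu c m i) = 0 :=
  stackel_hamiltonians_in_involution_general n N f σ s H hH lam hlam mu c r m
end
end

section
/- Let 0 ≤ r < s ≤ N, let λ ∈ ℝ \ {0}, μ ∈ ℝ, h ∈ ℝⁿ, c ∈ ℝᴺ, and define μ̄ = λ^{r−s} μ, c̄_i = h_{n+r−i+1} for i = r+1,…,s, c̄_i = c_i for i ∈ {1,…,r} ∪ {s+1,…,N}, h̄_i = c_{s−i+1} for i = 1,…,s−r, and h̄_i = h_{i−(s−r)} for i = s−r+1,…,n. Then the curve-r equation σ(λ)λ^{−r} + Σ_{k=r+1}^{N} c_k λ^{n+k−r−1} + Σ_{q=1}^{n} h_q λ^{n−q} + Σ_{k=1}^{r} c_k λ^{k−r−1} = f(λ) λ^{r} μ² holds if and only if the curve-s equation σ(λ)λ^{−s} + Σ_{k=s+1}^{N} c̄_k λ^{n+k−s−1}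 + Σ_{q=1}^{n} h̄_q λ^{n−q} + Σ_{k=1}^{s} c̄_k λ^{k−s−1} = f(λ) λ^{s} μ̄² holds. -/
/-!
Read by increasing power of `λ`, the parameters of the curve-`r` equation form the string
`c₁, …, c_r, h_n, …, h₁, c_{r+1}, …, c_N`, attached to `λ^{-r}, …, λ^{n+N-r-1}`. The Miura
relabeling says precisely that `(c̄, h̄)` produces, for the curve `s`, the same string as `(c, h)`
does for the curve `r`. Hence the curve-`s` equation is the curve-`r` equation multiplied by
`λ^{r-s} ≠ 0`.
-/

open Finset Function

noncomputable section

def padZero {N : ℕ} (c : Fin N → ℝ) (m : ℕ) : ℝ :=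
  if hm : m < N then c ⟨m, hm⟩ else 0

@[simp]
theorem padZero_val {N : ℕ} (c : Fin N → ℝ) (i : Fin N) : padZero c i = c i := by
  simp [padZero]

theorem padZero_of_lt {N : ℕ} (c : Fin N → ℝ) {m : ℕ} (hm : m < N) :
    padZero c m = c ⟨m, hm⟩ := dif_pos hm

/-- The `m`-th entry of the string multiplies `λ^(m - r)` in the curve-`r` equation. -/
def curveCoeffs {N : ℕ} (n r : ℕ) (c : Fin N → ℝ) (h : Fin n → ℝ) (m : ℕ) : ℝ :=
  if m < r then padZero c m
  else if m < r + n then padZero h (r + n - 1 - m)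
  else padZero c (m - n)

theorem curve_sum_eq_sum_curveCoeffs {N : ℕ} (n r : ℕ) (hr : r ≤ N) (c : Fin N → ℝ)
    (h : Fin n → ℝ) (lam : ℝ) :
    (∑ j : Fin N,
        if r ≤ (j : ℕ) then c j * lam ^ ((n : ℤ) + (j : ℕ) - (r : ℕ))
        else c j * lam ^ (((j : ℕ) : ℤ) - (r : ℕ)))
      + ∑ q : Fin n, h q * lam ^ ((n : ℤ) - 1 - (q : ℕ))
      = ∑ m ∈ range (N + n), curveCoeffs n r c h m * lam ^ ((m : ℤ) - r) := by
  simp_rw [← padZero_val c, ← padZero_val h]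
  rw [Fin.sum_univ_eq_sum_range (fun j => if r ≤ j then padZero c j * lam ^ ((n : ℤ) + j - r)
      else padZero c j * lam ^ ((j : ℤ) - r)),
    Fin.sum_univ_eq_sum_range (fun q => padZero h q * lam ^ ((n : ℤ) - 1 - q)),
    ← sum_range_reflect _ n]
  obtain ⟨d, rfl⟩ := Nat.exists_eq_add_of_le hr
  rw [sum_range_add, show r + d + n = r + n + d by omega, sum_range_add, sum_range_add,
    add_right_comm]
  refine congrArg₂ (· + ·) (congrArg₂ (· + ·) ?_ ?_) ?_ <;>
    refine sum_congr rfl fun x hx => ?_ <;> rw [mem_range] at hx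
  · rw [if_neg (by omega), curveCoeffs, if_pos hx]
  · rw [curveCoeffs, if_neg (by omega), if_pos (by omega),
      show r + n - 1 - (r + x) = n - 1 - x by omega]
    congr 2
    omega
  · rw [if_pos (by omega), curveCoeffs, if_neg (by omega), if_neg (by omega),
      show r + n + x - n = r + x by omega]
    congr 2
    omega

theorem curveCoeffs_miura {N n r s : ℕ} (hrs : r ≤ s) (hsN : s ≤ N) (hsn : s ≤ r + n)
    (c cbar : Fin N → ℝ) (h hbar : Fin n → ℝ)
    (hcbar1 : ∀ (i : Fin N) (h1 : r ≤ (i : ℕ)) (h2 : (i : ℕ) < s),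
      cbar i = h ⟨n + r - (i : ℕ) - 1, by omega⟩)
    (hcbar2 : ∀ i : Fin N, (i : ℕ) < r ∨ s ≤ (i : ℕ) → cbar i = c i)
    (hhbar1 : ∀ (i : Fin n) (h1 : (i : ℕ) < s - r),
      hbar i = c ⟨s - (i : ℕ) - 1, by omega⟩)
    (hhbar2 : ∀ (i : Fin n) (h1 : s - r ≤ (i : ℕ)),
      hbar i = h ⟨(i : ℕ) - (s - r), by have := i.isLt; omega⟩) :
    curveCoeffs n s cbar hbar = curveCoeffs n r c h := by
  funext m
  unfold curveCoeffs
  rcases lt_or_ge m r with hmr | hrm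
  · have hmN : m < N := by omega
    rw [if_pos (by omega), if_pos hmr, padZero_of_lt _ hmN, padZero_of_lt _ hmN,
      hcbar2 _ (Or.inl hmr)]
  rcases lt_or_ge m s with hms | hsm
  · rw [if_pos hms, if_neg (by omega), if_pos (by omega), padZero_of_lt _ (by omega),
      padZero_of_lt _ (by omega), hcbar1 _ hrm hms]
    congr 1
    ext
    simp only
    omega
  rw [if_neg (show ¬m < s by omega), if_neg (show ¬m < r by omega)]
  rcases lt_or_ge m (s + n) with hmsn | hsnm
  · rw [if_pos hmsn, padZero_of_lt _ (by omega)]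
    rcases lt_or_ge m (r + n) with hmrn | hrnm
    · rw [if_pos hmrn, padZero_of_lt _ (by omega), hhbar2 _ (by simp only; omega)]
      congr 1
      ext
      simp only
      omega
    · rw [if_neg (by omega), padZero_of_lt _ (by omega), hhbar1 _ (by simp only; omega)]
      congr 1
      ext
      simp only
      omega
  · rw [if_neg (show ¬m < s + n by omega), if_neg (show ¬m < r + n by omega),
      padZero, padZero]
    split_ifs
    · exact hcbar2 _ (Or.inr (by simp only; omega))
    · rfl

/-- the Miura map between the curve-`r` and the curve-`s` separation curves.
For `0 ≤ r < s ≤ N`, `λ ≠ 0`, with `μ̄ = λ^{r-s} μ` and the stated relabeling of the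
parameters `c` and Hamiltonian values `h` (all 1-based in the paper, 0-based here), the
curve-`r` equation holds iff the curve-`s` equation holds. -/
theorem miura_map_between_curves
    (n N : ℕ) (hNn : N ≤ n)
    (f σ : LaurentPolynomial ℝ)
    (r s : ℕ) (hrs : r < s) (hsN : s ≤ N)
    (lam : ℝ) (hlam : lam ≠ 0) (mu : ℝ)
    (h : Fin n → ℝ) (c : Fin N → ℝ)
    (mubar : ℝ) (hmubar : mubar = lam ^ ((r : ℤ) - (s : ℕ)) * mu)
    (cbar : Fin N → ℝ) (hbar : Fin n → ℝ)
    -- `c̄_i = h_{n+r-i+1}` for `i = r+1, …, s` (1-based):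
    (hcbar1 : ∀ (i : Fin N) (h1 : r ≤ (i : ℕ)) (h2 : (i : ℕ) < s),
      cbar i = h ⟨n + r - (i : ℕ) - 1, by omega⟩)
    -- `c̄_i = c_i` for `i ∈ {1, …, r} ∪ {s+1, …, N}` (1-based):
    (hcbar2 : ∀ i : Fin N, (i : ℕ) < r ∨ s ≤ (i : ℕ) → cbar i = c i)
    -- `h̄_i = c_{s-i+1}` for `i = 1, …, s-r` (1-based):
    (hhbar1 : ∀ (i : Fin n) (h1 : (i : ℕ) < s - r),
      hbar i = c ⟨s - (i : ℕ) - 1, by omega⟩)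
    -- `h̄_i = h_{i-(s-r)}` for `i = s-r+1, …, n` (1-based):
    (hhbar2 : ∀ (i : Fin n) (h1 : s - r ≤ (i : ℕ)),
      hbar i = h ⟨(i : ℕ) - (s - r), by have := i.isLt; omega⟩) :
    -- the curve-`r` equation:
    (leval σ lam * lam ^ (-(r : ℤ))
      + (∑ j : Fin N,
          if r ≤ (j : ℕ) then c j * lam ^ ((n : ℤ) + (j : ℕ) - (r : ℕ))
          else c j * lam ^ (((j : ℕ) : ℤ) - (r : ℕ)))
      + (∑ q : Fin n, h q * lam ^ ((n : ℤ) - 1 - (q : ℕ)))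
      = leval f lam * lam ^ (r : ℤ) * mu ^ 2)
    ↔
    -- the curve-`s` equation:
    (leval σ lam * lam ^ (-(s : ℤ))
      + (∑ j : Fin N,
          if s ≤ (j : ℕ) then cbar j * lam ^ ((n : ℤ) + (j : ℕ) - (s : ℕ))
          else cbar j * lam ^ (((j : ℕ) : ℤ) - (s : ℕ)))
      + (∑ q : Fin n, hbar q * lam ^ ((n : ℤ) - 1 - (q : ℕ)))
      = leval f lam * lam ^ (s : ℤ) * mubar ^ 2) := by
  rw [add_assoc, curve_sum_eq_sum_curveCoeffs n r (hrs.le.trans hsN), add_assoc,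
    curve_sum_eq_sum_curveCoeffs n s hsN,
    curveCoeffs_miura hrs.le hsN (by omega) c cbar h hbar hcbar1 hcbar2 hhbar1 hhbar2, hmubar]
  have hshift : ∑ m ∈ range (N + n), curveCoeffs n r c h m * lam ^ ((m : ℤ) - s)
      = lam ^ ((r : ℤ) - s) *
          ∑ m ∈ range (N + n), curveCoeffs n r c h m * lam ^ ((m : ℤ) - r) := by
    rw [mul_sum]
    refine sum_congr rfl fun m _ => ?_
    rw [mul_left_comm, ← zpow_add₀ hlam]
    ring_nf
  rw [hshift]
  generalize ∑ m ∈ range (N + n), curveCoeffs n r c h m * lam ^ ((m : ℤ) - r) = P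
  have hscale : leval σ lam * lam ^ (-(s : ℤ)) + lam ^ ((r : ℤ) - s) * P
        - leval f lam * lam ^ (s : ℤ) * (lam ^ ((r : ℤ) - s) * mu) ^ 2
      = lam ^ ((r : ℤ) - s) * (leval σ lam * lam ^ (-(r : ℤ)) + P
        - leval f lam * lam ^ (r : ℤ) * mu ^ 2) := by
    simp only [zpow_sub₀ hlam, zpow_neg, zpow_natCast]
    field_simp
  rw [← sub_eq_zero, ← sub_eq_zero (a := _ + _), hscale,
    mul_eq_zero_iff_left (zpow_ne_zero _ hlam)]
end
end

section
/- Let s ∈ {1,…,N}. For every (λ, μ, c) ∈ Ω × ℝⁿ × ℝᴺ, the curve-s Hamiltonians pull back under the Miura map M_{0→s} as: h_i^{(s)}( M_{0→s}(λ, μ, c) ) = c_{s−i+1} for i = 1,…,s, and h_i^{(s)}( M_{0→s}(λ, μ, c) ) = h_{i−s}(λ, μ, c) for i = s+1,…,n. -/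
open Finset Function

noncomputable section

/-- The extended phase space `ℝⁿ × ℝⁿ × ℝᴺ` (coordinates `(λ, μ, c)`). -/
abbrev PhaseP (n N : ℕ) := (Fin n → ℝ) × (Fin n → ℝ) × (Fin N → ℝ)

/-- The Miura map `M_{r→s}` on the extended phase space (for `r ≤ s ≤ N ≤ n`), built from
the curve-`r` Hamiltonians `Hr`:  `λ̄ᵢ = λᵢ`, `μ̄ᵢ = λᵢ^{r-s} μᵢ`,
`c̄ᵢ = h^{(r)}_{n+r-i+1}` for `i = r+1,…,s` and `c̄ᵢ = cᵢ` otherwise (1-based indexing;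
internally 0-based).  For `r = 0` this is `M_{0→s}`, and `M_{0→0}` is the identity. -/
def Mrs (n N : ℕ) (hn : 1 ≤ n) (r s : ℕ)
    (Hr : (Fin n → ℝ) → (Fin n → ℝ) → (Fin N → ℝ) → Fin n → ℝ)
    (x : PhaseP n N) : PhaseP n N :=
  (x.1, fun i => x.1 i ^ ((r : ℤ) - (s : ℕ)) * x.2.1 i,
    fun j : Fin N =>
      if h : r ≤ (j : ℕ) ∧ (j : ℕ) < s then
        Hr x.1 x.2.1 x.2.2 ⟨n + r - (j : ℕ) - 1, by obtain ⟨h1, h2⟩ := h; omega⟩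
      else x.2.2 j)

/-
Multiplying the curve-0 separation relation at `(λ, μ, c)` by `λᵢ^{-s}` gives the curve-`s`
relation at `M_{0→s}(λ, μ, c)`: the monomials of the two relations correspond bijectively by
exponent, the constants `c_k` with `k ≤ s` turning into the leading curve-`s` Hamiltonians and
the trailing `h_q` into the new constants. Since the separation relations determine the
Hamiltonians uniquely (a Vandermonde system), `h^{(s)} ∘ M_{0→s}` is this reindexed data.
-/

open scoped Matrix

theorem eq_of_forall_sum_mul_zpow_eq {K : Type*} [Field K] {n : ℕ} {x : Fin n → K}
    (hx : Injective x) {a b : Fin n → K}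
    (h : ∀ i, ∑ q : Fin n, a q * x i ^ ((n : ℤ) - 1 - q)
      = ∑ q : Fin n, b q * x i ^ ((n : ℤ) - 1 - q)) :
    a = b := by
  have hmulVec (v : Fin n → K) (i : Fin n) :
      ∑ q : Fin n, v q * x i ^ ((n : ℤ) - 1 - q) = (Matrix.vandermonde x *ᵥ (v ∘ Fin.rev)) i := by
    refine Fintype.sum_equiv Fin.revPerm _ _ fun q => ?_
    have hq := q.isLt
    simp only [Fin.revPerm_apply, Function.comp_apply, Fin.rev_rev, Matrix.vandermonde_apply,
      mul_comm (v q), ← zpow_natCast, Fin.val_rev]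
    congr 2
    omega
  have hzero : Matrix.vandermonde x *ᵥ ((a - b) ∘ Fin.rev) = 0 := by
    ext i
    simpa [← hmulVec, sub_mul, sub_eq_zero] using h i
  have := Matrix.eq_zero_of_mulVec_eq_zero (Matrix.det_vandermonde_ne_zero_iff.mpr hx) hzero
  funext q
  simpa [sub_eq_zero] using congrFun this q.rev

section Separation

variable {n N : ℕ}

/-- The power of `x` multiplying each unknown of the curve-`r` relation, `inl j` standing for
`c_{j+1}` and `inr q` for `h_{q+1}`. -/
def sepExponent (r : ℕ) : Fin N ⊕ Fin n → ℤ
  | .inl j => if r ≤ (j : ℕ) then (n : ℤ) + (j : ℕ) - r else ((j : ℕ) : ℤ) - r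
  | .inr q => (n : ℤ) - 1 - (q : ℕ)

def sepLHS (σ : LaurentPolynomial ℝ) (r : ℕ) (x : ℝ) (c : Fin N → ℝ) (h : Fin n → ℝ) : ℝ :=
  leval σ x * x ^ (-(r : ℤ)) + ∑ y, Sum.elim c h y * x ^ sepExponent r y

theorem sepSol_iff {f σ : LaurentPolynomial ℝ} {r : ℕ}
    {H : (Fin n → ℝ) → (Fin n → ℝ) → (Fin N → ℝ) → Fin n → ℝ} :
    SepSol n N f σ r H ↔ ∀ lam ∈ Omega n, ∀ mu c i,
      sepLHS σ r (lam i) c (H lam mu c) = leval f (lam i) * lam i ^ (r : ℤ) * mu i ^ 2 := by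
  simp only [SepSol, sepLHS, sepExponent, Fintype.sum_sum_type, Sum.elim_inl, Sum.elim_inr,
    apply_ite, add_assoc]

theorem eq_of_sepLHS_eq {σ : LaurentPolynomial ℝ} {r : ℕ} {lam : Fin n → ℝ}
    (hlam : Injective lam) {c : Fin N → ℝ} {a b : Fin n → ℝ}
    (h : ∀ i, sepLHS σ r (lam i) c a = sepLHS σ r (lam i) c b) : a = b := by
  refine eq_of_forall_sum_mul_zpow_eq hlam fun i => ?_
  simpa [sepLHS, sepExponent, Fintype.sum_sum_type] using h i

def miuraConsts (hn : 1 ≤ n) (s : ℕ) (c : Fin N → ℝ) (h : Fin n → ℝ) : Fin N → ℝ :=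
  fun j => if (j : ℕ) < s then h ⟨n - j - 1, by omega⟩ else c j

def miuraHamiltonians {s : ℕ} (hsN : s ≤ N) (c : Fin N → ℝ) (h : Fin n → ℝ) : Fin n → ℝ :=
  fun q => if hq : (q : ℕ) < s then c ⟨s - q - 1, lt_of_lt_of_le (by omega) hsN⟩
    else h ⟨q - s, (Nat.sub_le _ _).trans_lt q.isLt⟩

theorem Mrs_zero_apply (hn : 1 ≤ n) (s : ℕ)
    (H : (Fin n → ℝ) → (Fin n → ℝ) → (Fin N → ℝ) → Fin n → ℝ) (lam mu : Fin n → ℝ) (c : Fin N → ℝ) :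
    Mrs n N hn 0 s H (lam, mu, c)
      = (lam, fun i => lam i ^ (-(s : ℤ)) * mu i, miuraConsts hn s c (H lam mu c)) := by
  simp only [Mrs, Nat.cast_zero, zero_sub, zero_le, true_and, add_zero]
  rfl

def miuraReindex {s : ℕ} (hsN : s ≤ N) (hNn : N ≤ n) : Fin N ⊕ Fin n → Fin N ⊕ Fin n
  | .inl j => if hj : (j : ℕ) < s then .inr ⟨s - 1 - j, by omega⟩ else .inl j
  | .inr q => if hq : (q : ℕ) + s < n then .inr ⟨q + s, hq⟩ else .inl ⟨n - 1 - q, by omega⟩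

theorem miuraReindex_injective {s : ℕ} (hsN : s ≤ N) (hNn : N ≤ n) :
    Injective (miuraReindex hsN hNn) := by
  rintro (a | a) (b | b) hab <;>
    simp only [miuraReindex] at hab <;> split_ifs at hab <;>
    simp only [Sum.inr.injEq, reduceCtorEq, Fin.ext_iff, Sum.inl_injective.eq_iff] at hab ⊢ <;>
    omega

theorem sepExponent_miuraReindex {s : ℕ} (hsN : s ≤ N) (hNn : N ≤ n) (y : Fin N ⊕ Fin n) :
    sepExponent s (miuraReindex hsN hNn y) = sepExponent 0 y - s := by
  rcases y with j | q <;> simp only [miuraReindex] <;> split_ifs <;> simp only [sepExponent] <;>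
    (try split_ifs) <;> omega

theorem coeff_miuraReindex (hn : 1 ≤ n) {s : ℕ} (hsN : s ≤ N) (hNn : N ≤ n) (c : Fin N → ℝ)
    (h : Fin n → ℝ) (y : Fin N ⊕ Fin n) :
    Sum.elim (miuraConsts hn s c h) (miuraHamiltonians hsN c h) (miuraReindex hsN hNn y)
      = Sum.elim c h y := by
  rcases y with j | q <;> simp only [miuraReindex] <;> split_ifs <;>
    simp only [Sum.elim_inl, Sum.elim_inr, miuraConsts, miuraHamiltonians] <;> split_ifs <;>
    first | omega | exact congrArg _ (Fin.ext (by grind))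

theorem sepLHS_miura (hn : 1 ≤ n) {s : ℕ} (hsN : s ≤ N) (hNn : N ≤ n) (σ : LaurentPolynomial ℝ)
    {x : ℝ} (hx : x ≠ 0) (c : Fin N → ℝ) (h : Fin n → ℝ) :
    sepLHS σ s x (miuraConsts hn s c h) (miuraHamiltonians hsN c h)
      = sepLHS σ 0 x c h * x ^ (-(s : ℤ)) := by
  rw [sepLHS, sepLHS, add_mul, sum_mul]
  congr 1
  · simp
  · symm
    refine Fintype.sum_bijective _
      (Finite.injective_iff_bijective.mp (miuraReindex_injective hsN hNn)) _ _ fun y => ?_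
    rw [coeff_miuraReindex, sepExponent_miuraReindex, mul_assoc, ← zpow_add₀ hx, sub_eq_add_neg]

end Separation

/-- pullback of the curve-`s` Hamiltonians under the Miura map `M_{0→s}`:
`h_i^{(s)} ∘ M_{0→s} = c_{s-i+1}` for `i = 1, …, s` and `h_i^{(s)} ∘ M_{0→s} = h_{i-s}`
for `i = s+1, …, n` (1-based; 0-based below). -/
theorem miura_pullback_of_hamiltonians
    (n N : ℕ) (hn : 1 ≤ n) (hNn : N ≤ n)
    (f σ : LaurentPolynomial ℝ) (s : ℕ) (hsN : s ≤ N)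
    (H0 Hs : (Fin n → ℝ) → (Fin n → ℝ) → (Fin N → ℝ) → Fin n → ℝ)
    (hH0 : SepSol n N f σ 0 H0) (hHs : SepSol n N f σ s Hs)
    (lam : Fin n → ℝ) (hlam : lam ∈ Omega n) (mu : Fin n → ℝ) (c : Fin N → ℝ) :
    (∀ (i : Fin n) (h1 : (i : ℕ) < s),
      Hs (Mrs n N hn 0 s H0 (lam, mu, c)).1 (Mrs n N hn 0 s H0 (lam, mu, c)).2.1
          (Mrs n N hn 0 s H0 (lam, mu, c)).2.2 i
        = c ⟨s - (i : ℕ) - 1, by omega⟩)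
    ∧ ∀ (i : Fin n) (h1 : s ≤ (i : ℕ)),
      Hs (Mrs n N hn 0 s H0 (lam, mu, c)).1 (Mrs n N hn 0 s H0 (lam, mu, c)).2.1
          (Mrs n N hn 0 s H0 (lam, mu, c)).2.2 i
        = H0 lam mu c ⟨(i : ℕ) - s, by have := i.isLt; omega⟩ := by
  have hpull : Hs lam (fun i => lam i ^ (-(s : ℤ)) * mu i) (miuraConsts hn s c (H0 lam mu c))
      = miuraHamiltonians hsN c (H0 lam mu c) := by
    refine eq_of_sepLHS_eq (σ := σ) (r := s) (c := miuraConsts hn s c (H0 lam mu c)) hlam.2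
      fun i => ?_
    rw [sepSol_iff.mp hHs lam hlam _ _ i, sepLHS_miura hn hsN hNn σ (hlam.1 i),
      sepSol_iff.mp hH0 lam hlam mu c i]
    have hlam_i := hlam.1 i
    simp only [Nat.cast_zero, zpow_zero, zpow_neg, zpow_natCast]
    field_simp
  simp only [Mrs_zero_apply, hpull, miuraHamiltonians]
  exact ⟨fun i hi => dif_pos hi, fun i hi => dif_neg (not_lt.mpr hi)⟩
end
end

section
/- (Theorem 1 of the paper.) Let s ∈ {1,…,N}. For every r ∈ {1,…,n} and every x ∈ Ω × ℝⁿ × ℝᴺ, the differential of the Miura map M_{0→s} maps the r-th Hamiltonian vector field of the curve-0 system to that of the curve-s system: D M_{0→s}(x) · X_r^{(0)}(x) = X_r^{(s)}( M_{0→s}(x) ). -/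
open Finset Function

noncomputable section

/-- The Hamiltonian vector field `X_r^{(s)}` of the curve-`s` system: its components in the
coordinates `(λ, μ, c)` are `(∂h_r/∂μ_1, …, ∂h_r/∂μ_n, -∂h_r/∂λ_1, …, -∂h_r/∂λ_n, 0, …, 0)`. -/
def XF {n N : ℕ} (H : (Fin n → ℝ) → (Fin n → ℝ) → (Fin N → ℝ) → Fin n → ℝ)
    (r : Fin n) (x : PhaseP n N) : PhaseP n N :=
  (fun i => deriv (fun t => H x.1 (Function.update x.2.1 i t) x.2.2 r) (x.2.1 i),
   fun i => - deriv (fun t => H (Function.update x.1 i t) x.2.1 x.2.2 r) (x.1 i),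
   0)

/-! On `Ω` the separation relations are the Vandermonde system `V(λ) h = b(λ, μ, c)`, so the
Hamiltonians are smooth and implicit differentiation gives
`∂h_q/∂μ_i = (V⁻¹)_{qi} ∂_μ b_i` and `∂h_q/∂λ_i = -(V⁻¹)_{qi} R_i'(λ_i)`, where `R_i` is the
`i`-th relation read as a Laurent polynomial in `λ_i`. Since both partials of `h_q` carry the
factor `(V⁻¹)_{qi}`, the brackets `{h_p, h_r}` vanish; they are the `c̄`-components of `DM · X_r`.

Multiplied by `λ^s`, the part of the curve-`s` relation that is linear in `(h, c)` has the
coefficient sequence `c_{<s}`, reversed `h`, `c_{≥s}`; the Miura map keeps this sequence and only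
moves the split point between `h` and `c`. Hence the curve-`s` residual at `M(x)` is `λ^{-s}`
times the curve-`0` residual plus `f(λ)(λ^{-s}μ² - λ^s μ̄²)`. At `λ = λ_i` this exhibits
`h^{(s)}(M x)` as a rearrangement of `(h, c)`, and differentiating it there gives
`R^{(s)}_i' = λ_i^{-s} R^{(0)}_i' - 2s f(λ_i) μ_i² λ_i^{-s-1}`, the `μ̄`-component of `DM · X_r`. -/

open Filter Topology
open scoped Matrix

lemma differentiableAt_det {𝕜 F : Type*} [NontriviallyNormedField 𝕜] [NormedAddCommGroup F]
    [NormedSpace 𝕜 F] {ι : Type*} [Fintype ι] [DecidableEq ι] {A : F → Matrix ι ι 𝕜} {y₀ : F}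
    (hA : ∀ i j, DifferentiableAt 𝕜 (fun y => A y i j) y₀) :
    DifferentiableAt 𝕜 (fun y => (A y).det) y₀ := by
  simp only [Matrix.det_apply']
  exact DifferentiableAt.fun_sum fun σ _ =>
    ((HasFDerivAt.finsetProd fun i _ => (hA (σ i) i).hasFDerivAt).differentiableAt).const_mul _

lemma Matrix.inv_mulVec_apply_eq_det_updateCol {K ι : Type*} [Field K] [Fintype ι]
    [DecidableEq ι] (A : Matrix ι ι K) (b : ι → K) (i : ι) :
    (A⁻¹ *ᵥ b) i = (A.det)⁻¹ * (A.updateCol i b).det := by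
  rw [Matrix.inv_def, Matrix.smul_mulVec, ← Matrix.cramer_eq_adjugate_mulVec, Pi.smul_apply,
    Matrix.cramer_apply, Ring.inverse_eq_inv, smul_eq_mul]

lemma differentiableAt_leval (p : LaurentPolynomial ℝ) {t : ℝ} (ht : t ≠ 0) :
    DifferentiableAt ℝ (leval p) t :=
  DifferentiableAt.fun_sum fun _ _ => (differentiableAt_zpow.mpr (Or.inl ht)).const_mul _

lemma isOpen_Omega {n : ℕ} : IsOpen (Omega n) := by
  have hΩ : Omega n = (⋂ i, {lam | lam i ≠ 0}) ∩ ⋂ i, ⋂ j, {lam | lam i = lam j → i = j} := by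
    ext lam
    simp [Omega, Injective]
  rw [hΩ]
  refine (isOpen_iInter_of_finite fun i => isOpen_ne_fun (continuous_apply i) continuous_const)
    |>.inter (isOpen_iInter_of_finite fun i => isOpen_iInter_of_finite fun j => ?_)
  by_cases hij : i = j
  · simp [hij]
  · simpa [hij] using isOpen_ne_fun (continuous_apply i) (continuous_apply j)

lemma eventually_update_mem_Omega {n : ℕ} {lam : Fin n → ℝ} (hlam : lam ∈ Omega n) (i : Fin n) :
    ∀ᶠ t in 𝓝 (lam i), update lam i t ∈ Omega n :=
  (continuous_const.update i continuous_id).continuousAt.eventually_mem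
    (isOpen_Omega.mem_nhds (by simpa))

def extendByZero {m : ℕ} (v : Fin m → ℝ) (k : ℕ) : ℝ := if hk : k < m then v ⟨k, hk⟩ else 0

lemma extendByZero_val {m : ℕ} (v : Fin m → ℝ) (k : Fin m) : extendByZero v k = v k := by
  simp [extendByZero]

namespace Staeckel

variable {n N : ℕ}

def sepPoly (s : ℕ) (h : Fin n → ℝ) (c : Fin N → ℝ) (t : ℝ) : ℝ :=
  (∑ j : Fin N, if s ≤ (j : ℕ) then c j * t ^ ((n : ℤ) + (j : ℕ) - (s : ℕ))
      else c j * t ^ (((j : ℕ) : ℤ) - (s : ℕ)))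
    + ∑ q : Fin n, h q * t ^ ((n : ℤ) - 1 - (q : ℕ))

def sepResidual (f σ : LaurentPolynomial ℝ) (s : ℕ) (h : Fin n → ℝ) (ν : ℝ) (c : Fin N → ℝ)
    (t : ℝ) : ℝ :=
  leval σ t * t ^ (-(s : ℤ)) + sepPoly s h c t - leval f t * t ^ (s : ℤ) * ν ^ 2

def vandermondeRev (lam : Fin n → ℝ) : Matrix (Fin n) (Fin n) ℝ :=
  Matrix.of fun i q => lam i ^ ((n : ℤ) - 1 - (q : ℕ))

def ham (f σ : LaurentPolynomial ℝ) (s : ℕ) (lam mu : Fin n → ℝ) (c : Fin N → ℝ) : Fin n → ℝ :=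
  (vandermondeRev lam)⁻¹ *ᵥ fun i => -sepResidual f σ s (0 : Fin n → ℝ) (mu i) c (lam i)

variable {f σ : LaurentPolynomial ℝ} {s : ℕ}

lemma sepResidual_eq_sum_add (h : Fin n → ℝ) (ν : ℝ) (c : Fin N → ℝ) (t : ℝ) :
    sepResidual f σ s h ν c t
      = ∑ q, h q * t ^ ((n : ℤ) - 1 - (q : ℕ)) + sepResidual f σ s (0 : Fin n → ℝ) ν c t := by
  simp only [sepResidual, sepPoly, Pi.zero_apply, zero_mul, Finset.sum_const_zero]
  ring

lemma vandermondeRev_eq_submatrix (lam : Fin n → ℝ) :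
    vandermondeRev lam = (Matrix.vandermonde lam).submatrix id Fin.revPerm := by
  ext i q
  have : (n : ℤ) - 1 - (q : ℕ) = ((Fin.rev q : ℕ) : ℤ) := by rw [Fin.val_rev]; omega
  simp only [vandermondeRev, Matrix.of_apply, this, zpow_natCast, Matrix.submatrix_apply, id,
    Fin.revPerm_apply, Matrix.vandermonde_apply]

lemma isUnit_det_vandermondeRev {lam : Fin n → ℝ} (hlam : Injective lam) :
    IsUnit (vandermondeRev lam).det := by
  rw [vandermondeRev_eq_submatrix, Matrix.det_permute', isUnit_iff_ne_zero]
  exact mul_ne_zero (by simp) (Matrix.det_vandermonde_ne_zero_iff.mpr hlam)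

lemma mulVec_vandermondeRev_apply (lam h : Fin n → ℝ) (i : Fin n) :
    (vandermondeRev lam *ᵥ h) i = ∑ q, h q * lam i ^ ((n : ℤ) - 1 - (q : ℕ)) := by
  simp [vandermondeRev, Matrix.mulVec, dotProduct, mul_comm]

lemma sepResidual_eq_zero_iff {lam : Fin n → ℝ} (hlam : Injective lam) (mu : Fin n → ℝ)
    (c : Fin N → ℝ) (h : Fin n → ℝ) :
    (∀ i, sepResidual f σ s h (mu i) c (lam i) = 0) ↔ h = ham f σ s lam mu c := by
  have hV := isUnit_det_vandermondeRev hlam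
  simp_rw [sepResidual_eq_sum_add h, ← mulVec_vandermondeRev_apply, add_eq_zero_iff_eq_neg, ham]
  constructor
  · intro hh
    rw [← funext hh, Matrix.mulVec_mulVec, Matrix.nonsing_inv_mul _ hV, Matrix.one_mulVec]
  · rintro rfl i
    rw [Matrix.mulVec_mulVec, Matrix.mul_nonsing_inv _ hV, Matrix.one_mulVec]

lemma sepResidual_ham {lam : Fin n → ℝ} (hlam : Injective lam) (mu : Fin n → ℝ)
    (c : Fin N → ℝ) (i : Fin n) : sepResidual f σ s (ham f σ s lam mu c) (mu i) c (lam i) = 0 :=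
  (sepResidual_eq_zero_iff hlam mu c _).mpr rfl i

lemma eq_ham_of_sepSol {H : (Fin n → ℝ) → (Fin n → ℝ) → (Fin N → ℝ) → Fin n → ℝ}
    (hH : SepSol n N f σ s H) {lam : Fin n → ℝ} (hlam : lam ∈ Omega n) (mu : Fin n → ℝ)
    (c : Fin N → ℝ) : H lam mu c = ham f σ s lam mu c :=
  (sepResidual_eq_zero_iff hlam.2 mu c _).mp fun i => by
    simp only [sepResidual, sepPoly]
    linear_combination hH lam hlam mu c i

section Derivatives

variable {E : Type*} [NormedAddCommGroup E] [NormedSpace ℝ E] {x : E}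

lemma differentiableAt_sepResidual {h : Fin n → ℝ} {ν τ : E → ℝ} {c : E → Fin N → ℝ}
    (hν : DifferentiableAt ℝ ν x) (hc : DifferentiableAt ℝ c x) (hτ : DifferentiableAt ℝ τ x)
    (hτx : τ x ≠ 0) :
    DifferentiableAt ℝ (fun y => sepResidual f σ s h (ν y) (c y) (τ y)) x := by
  have hlev : ∀ p, DifferentiableAt ℝ (fun y => leval p (τ y)) x := fun p =>
    (differentiableAt_leval p hτx).comp x hτ
  have hcsum : DifferentiableAt ℝ (fun y => ∑ j : Fin N, if s ≤ (j : ℕ)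
      then c y j * τ y ^ ((n : ℤ) + (j : ℕ) - (s : ℕ))
      else c y j * τ y ^ (((j : ℕ) : ℤ) - (s : ℕ))) x :=
    DifferentiableAt.fun_sum fun j _ => by
      have := differentiableAt_pi.1 hc j
      split_ifs <;> fun_prop (disch := exact Or.inl hτx)
  simp only [sepResidual, sepPoly]
  fun_prop (disch := exact Or.inl hτx)

lemma differentiableAt_ham {lam mu : E → Fin n → ℝ} {c : E → Fin N → ℝ}
    (hlam : DifferentiableAt ℝ lam x) (hmu : DifferentiableAt ℝ mu x)
    (hc : DifferentiableAt ℝ c x) (hx : lam x ∈ Omega n) (q : Fin n) :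
    DifferentiableAt ℝ (fun y => ham f σ s (lam y) (mu y) (c y) q) x := by
  have hV : ∀ i p, DifferentiableAt ℝ (fun y => vandermondeRev (lam y) i p) x := fun i p =>
    (differentiableAt_pi.1 hlam i).zpow (Or.inl (hx.1 i))
  simp only [ham, Matrix.inv_mulVec_apply_eq_det_updateCol]
  refine ((differentiableAt_det hV).inv (isUnit_det_vandermondeRev hx.2).ne_zero).mul
    (differentiableAt_det fun i p => ?_)
  simp only [Matrix.updateCol_apply]
  split_ifs
  · exact (differentiableAt_sepResidual (differentiableAt_pi.1 hmu i) hc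
      (differentiableAt_pi.1 hlam i) (hx.1 i)).neg
  · exact hV i p

lemma hasDerivAt_sepResidual (h : Fin n → ℝ) (ν : ℝ) (c : Fin N → ℝ) {t : ℝ} (ht : t ≠ 0) :
    HasDerivAt (sepResidual f σ s h ν c)
      (∑ q, h q * (((n : ℤ) - 1 - (q : ℕ) : ℤ) * t ^ ((n : ℤ) - 1 - (q : ℕ) - 1))
        + deriv (sepResidual f σ s (0 : Fin n → ℝ) ν c) t) t := by
  rw [show sepResidual f σ s h ν c = _ from funext (sepResidual_eq_sum_add h ν c)]
  exact (HasDerivAt.fun_sum fun q _ => (hasDerivAt_zpow _ t (Or.inl ht)).const_mul (h q)).add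
    (differentiableAt_sepResidual (differentiableAt_const ν) (differentiableAt_const c)
      differentiableAt_id ht).hasDerivAt

lemma hasDerivAt_sepResidual_comp {h : ℝ → Fin n → ℝ} {u : Fin n → ℝ} {τ : ℝ → ℝ} {τ' t₀ : ℝ}
    (hh : ∀ q, HasDerivAt (fun t => h t q) (u q) t₀) (hτ : HasDerivAt τ τ' t₀) (hτ₀ : τ t₀ ≠ 0)
    (ν : ℝ) (c : Fin N → ℝ) :
    HasDerivAt (fun t => sepResidual f σ s (h t) ν c (τ t))
      (∑ q, u q * τ t₀ ^ ((n : ℤ) - 1 - (q : ℕ))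
        + deriv (sepResidual f σ s (h t₀) ν c) (τ t₀) * τ') t₀ := by
  rw [(hasDerivAt_sepResidual (h t₀) ν c hτ₀).deriv]
  simp_rw [sepResidual_eq_sum_add (h _)]
  have hg : HasDerivAt (sepResidual f σ s (0 : Fin n → ℝ) ν c)
      (deriv (sepResidual f σ s (0 : Fin n → ℝ) ν c) (τ t₀)) (τ t₀) :=
    (differentiableAt_sepResidual (differentiableAt_const ν) (differentiableAt_const c)
      differentiableAt_id hτ₀).hasDerivAt
  have hpow : ∀ q : Fin n, HasDerivAt (fun t => τ t ^ ((n : ℤ) - 1 - (q : ℕ)))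
      (((n : ℤ) - 1 - (q : ℕ) : ℤ) * τ t₀ ^ ((n : ℤ) - 1 - (q : ℕ) - 1) * τ') t₀ := fun q =>
    (hasDerivAt_zpow _ _ (Or.inl hτ₀)).comp t₀ hτ
  refine ((HasDerivAt.fun_sum fun q _ => (hh q).mul (hpow q)).add (hg.comp t₀ hτ)).congr_deriv ?_
  simp only [Finset.sum_add_distrib, add_mul, Finset.sum_mul, mul_assoc, add_assoc]

lemma hasDerivAt_ham_mu (lam mu : Fin n → ℝ) (c : Fin N → ℝ) (q i : Fin n) :
    HasDerivAt (fun t => ham f σ s lam (update mu i t) c q)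
      ((vandermondeRev lam)⁻¹ q i * (2 * leval f (lam i) * lam i ^ (s : ℤ) * mu i)) (mu i) := by
  have hrhs : ∀ j, HasDerivAt
      (fun t => -sepResidual f σ s (0 : Fin n → ℝ) (update mu i t j) c (lam j))
      ((Pi.single i (2 * leval f (lam i) * lam i ^ (s : ℤ) * mu i) : Fin n → ℝ) j) (mu i) := by
    intro j
    rcases eq_or_ne j i with rfl | hji
    · simp only [update_self, Pi.single_eq_same, sepResidual, neg_sub]
      exact (((hasDerivAt_pow 2 _).const_mul _).sub_const _).congr_deriv (by ring)
    · simp only [update_of_ne hji, Pi.single_eq_of_ne hji]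
      exact hasDerivAt_const _ _
  have := HasDerivAt.fun_sum (u := univ) fun j _ => (hrhs j).const_mul ((vandermondeRev lam)⁻¹ q j)
  simpa [ham, Matrix.mulVec, dotProduct, Pi.single_apply] using this

lemma hasDerivAt_ham_lam {lam : Fin n → ℝ} (hlam : lam ∈ Omega n) (mu : Fin n → ℝ)
    (c : Fin N → ℝ) (q i : Fin n) :
    HasDerivAt (fun t => ham f σ s (update lam i t) mu c q)
      (-((vandermondeRev lam)⁻¹ q i
        * deriv (sepResidual f σ s (ham f σ s lam mu c) (mu i) c) (lam i))) (lam i) := by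
  set u : Fin n → ℝ := fun p => deriv (fun t => ham f σ s (update lam i t) mu c p) (lam i)
  have hu : ∀ p, HasDerivAt (fun t => ham f σ s (update lam i t) mu c p) (u p) (lam i) :=
    fun p => (differentiableAt_ham (hasDerivAt_update lam i (lam i)).differentiableAt
      (differentiableAt_const mu) (differentiableAt_const c) (by simpa) p).hasDerivAt
  -- implicit differentiation of the relations, which hold at `update lam i t` for `t` near `lam i`
  have hsys : vandermondeRev lam *ᵥ u
      = Pi.single i (-deriv (sepResidual f σ s (ham f σ s lam mu c) (mu i) c) (lam i)) := by
    funext j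
    have hR := hasDerivAt_sepResidual_comp (f := f) (σ := σ) (s := s) hu
      (hasDerivAt_pi.1 (hasDerivAt_update lam i (lam i)) j) (by simpa using hlam.1 j) (mu j) c
    have hev : (fun t => sepResidual f σ s (ham f σ s (update lam i t) mu c) (mu j) c
        (update lam i t j)) =ᶠ[𝓝 (lam i)] fun _ => 0 := by
      filter_upwards [eventually_update_mem_Omega hlam i] with t ht
      exact sepResidual_ham ht.2 mu c j
    have h0 := hR.unique ((hasDerivAt_const _ _).congr_of_eventuallyEq hev)
    rw [update_eq_self] at h0
    rw [mulVec_vandermondeRev_apply]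
    rcases eq_or_ne j i with rfl | hji
    · simp only [Pi.single_eq_same, mul_one] at h0 ⊢
      linarith
    · simpa [Pi.single_eq_of_ne hji] using h0
  have hsol : u = (vandermondeRev lam)⁻¹ *ᵥ
      Pi.single i (-deriv (sepResidual f σ s (ham f σ s lam mu c) (mu i) c) (lam i)) := by
    rw [← hsys, Matrix.mulVec_mulVec, Matrix.nonsing_inv_mul _ (isUnit_det_vandermondeRev hlam.2),
      Matrix.one_mulVec]
  have hq := hu q
  rwa [hsol, Matrix.mulVec, dotProduct_single, mul_neg] at hq

end Derivatives

def sepPolyCoeff (s : ℕ) (h : Fin n → ℝ) (c : Fin N → ℝ) (e : ℕ) : ℝ :=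
  if e < s then extendByZero c e
  else if e < n + s then extendByZero h (n + s - 1 - e) else extendByZero c (e - n)

lemma sepPoly_eq_sum_sepPolyCoeff (hsN : s ≤ N) (h : Fin n → ℝ) (c : Fin N → ℝ) (t : ℝ) :
    sepPoly s h c t = ∑ e ∈ range (n + N), sepPolyCoeff s h c e * t ^ ((e : ℤ) - s) := by
  have hh : ∑ q : Fin n, h q * t ^ ((n : ℤ) - 1 - (q : ℕ))
      = ∑ e ∈ Ico s (n + s), sepPolyCoeff s h c e * t ^ ((e : ℤ) - s) := by
    rw [sum_Ico_eq_sum_range, add_tsub_cancel_right, ← sum_range_reflect]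
    simp_rw [← extendByZero_val h]
    rw [Fin.sum_univ_eq_sum_range (fun q => extendByZero h q * t ^ ((n : ℤ) - 1 - q))]
    refine sum_congr rfl fun q hq => ?_
    have hq := mem_range.mp hq
    rw [sepPolyCoeff, if_neg (by omega), if_pos (by omega)]
    congr 2 <;> omega
  have hc : (∑ j : Fin N, if s ≤ (j : ℕ) then c j * t ^ ((n : ℤ) + (j : ℕ) - (s : ℕ))
        else c j * t ^ (((j : ℕ) : ℤ) - (s : ℕ)))
      = ∑ e ∈ range s, sepPolyCoeff s h c e * t ^ ((e : ℤ) - s)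
        + ∑ e ∈ Ico (n + s) (n + N), sepPolyCoeff s h c e * t ^ ((e : ℤ) - s) := by
    simp_rw [← extendByZero_val c]
    rw [Fin.sum_univ_eq_sum_range (fun j => if s ≤ j then extendByZero c j * t ^ ((n : ℤ) + j - s)
        else extendByZero c j * t ^ ((j : ℤ) - s)), ← sum_range_add_sum_Ico _ hsN,
      add_comm n s, add_comm n N, ← sum_Ico_add']
    congr 1 <;> refine sum_congr rfl fun j hj => ?_
    · have hj := mem_range.mp hj
      rw [sepPolyCoeff, if_neg (by omega), if_pos hj]
    · have hj := mem_Ico.mp hj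
      rw [sepPolyCoeff, if_pos hj.1, if_neg (by omega), if_neg (by omega), Nat.add_sub_cancel]
      congr 2
      push_cast
      ring
  rw [sepPoly, hh, hc, ← sum_range_add_sum_Ico _ (by omega : s ≤ n + N),
    ← sum_Ico_consecutive _ (by omega : s ≤ n + s) (by omega : n + s ≤ n + N)]
  ring

def miuraHam (s : ℕ) (h : Fin n → ℝ) (c : Fin N → ℝ) : Fin n → ℝ :=
  fun q => if (q : ℕ) < s then extendByZero c (s - 1 - q) else extendByZero h (q - s)

def miuraC (s : ℕ) (h : Fin n → ℝ) (c : Fin N → ℝ) : Fin N → ℝ :=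
  fun k => if (k : ℕ) < s then extendByZero h (n - 1 - k) else c k

lemma sepPolyCoeff_miura (hsN : s ≤ N) (hNn : N ≤ n) (h : Fin n → ℝ) (c : Fin N → ℝ) {e : ℕ}
    (he : e < n + N) :
    sepPolyCoeff s (miuraHam s h c) (miuraC s h c) e = sepPolyCoeff 0 h c e := by
  simp only [sepPolyCoeff, miuraHam, miuraC, extendByZero]
  split_ifs <;> first | rfl | omega | (congr 2; omega)

lemma sepPoly_miura (hsN : s ≤ N) (hNn : N ≤ n) (h : Fin n → ℝ) (c : Fin N → ℝ) {t : ℝ}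
    (ht : t ≠ 0) :
    sepPoly s (miuraHam s h c) (miuraC s h c) t = t ^ (-(s : ℤ)) * sepPoly 0 h c t := by
  rw [sepPoly_eq_sum_sepPolyCoeff hsN, sepPoly_eq_sum_sepPolyCoeff (Nat.zero_le N), mul_sum]
  refine sum_congr rfl fun e he => ?_
  rw [sepPolyCoeff_miura hsN hNn h c (mem_range.mp he), sub_eq_neg_add, zpow_add₀ ht]
  simp only [CharP.cast_eq_zero, sub_zero]
  ring

lemma sepResidual_miura (hsN : s ≤ N) (hNn : N ≤ n) (h : Fin n → ℝ) (c : Fin N → ℝ) (μ ν : ℝ)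
    {t : ℝ} (ht : t ≠ 0) :
    sepResidual f σ s (miuraHam s h c) ν (miuraC s h c) t
      = t ^ (-(s : ℤ)) * sepResidual f σ 0 h μ c t
        + leval f t * (t ^ (-(s : ℤ)) * μ ^ 2 - t ^ (s : ℤ) * ν ^ 2) := by
  simp only [sepResidual, sepPoly_miura hsN hNn h c ht, CharP.cast_eq_zero, neg_zero, zpow_zero]
  ring

lemma ham_miura (hsN : s ≤ N) (hNn : N ≤ n) {lam : Fin n → ℝ} (hlam : lam ∈ Omega n)
    (mu : Fin n → ℝ) (c : Fin N → ℝ) :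
    ham f σ s lam (fun i => lam i ^ (-(s : ℤ)) * mu i) (miuraC s (ham f σ 0 lam mu c) c)
      = miuraHam s (ham f σ 0 lam mu c) c := by
  refine ((sepResidual_eq_zero_iff hlam.2 _ _ _).mp fun i => ?_).symm
  have hpow : lam i ^ (s : ℤ) ≠ 0 := zpow_ne_zero _ (hlam.1 i)
  rw [sepResidual_miura hsN hNn _ c (mu i) _ (hlam.1 i), sepResidual_ham hlam.2, zpow_neg]
  field_simp
  ring

lemma deriv_sepResidual_miura (hsN : s ≤ N) (hNn : N ≤ n) {h : Fin n → ℝ} {c : Fin N → ℝ}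
    {μ t : ℝ} (ht : t ≠ 0) (h0 : sepResidual f σ 0 h μ c t = 0) :
    deriv (sepResidual f σ s (miuraHam s h c) (t ^ (-(s : ℤ)) * μ) (miuraC s h c)) t
      = t ^ (-(s : ℤ)) * deriv (sepResidual f σ 0 h μ c) t
        - 2 * s * leval f t * μ ^ 2 * t ^ (-(s : ℤ) - 1) := by
  set ν := t ^ (-(s : ℤ)) * μ
  have hev : sepResidual f σ s (miuraHam s h c) ν (miuraC s h c) =ᶠ[𝓝 t] fun τ =>
      τ ^ (-(s : ℤ)) * sepResidual f σ 0 h μ c τ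
        + leval f τ * (τ ^ (-(s : ℤ)) * μ ^ 2 - τ ^ (s : ℤ) * ν ^ 2) := by
    filter_upwards [eventually_ne_nhds ht] with τ hτ
    exact sepResidual_miura hsN hNn h c μ ν hτ
  have hR0 : HasDerivAt (sepResidual f σ 0 h μ c) (deriv (sepResidual f σ 0 h μ c) t) t :=
    (differentiableAt_sepResidual (differentiableAt_const μ) (differentiableAt_const c)
      differentiableAt_id ht).hasDerivAt
  have hneg := hasDerivAt_zpow (-(s : ℤ)) t (Or.inl ht)
  have hpos := hasDerivAt_zpow (s : ℤ) t (Or.inl ht)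
  have hrhs := (hneg.fun_mul hR0).fun_add ((differentiableAt_leval f ht).hasDerivAt.fun_mul
    ((hneg.mul_const (μ ^ 2)).fun_sub (hpos.mul_const (ν ^ 2))))
  rw [hev.deriv_eq, hrhs.deriv, h0]
  simp only [ν, zpow_sub_one₀ ht, zpow_neg]
  have hts : t ^ (s : ℤ) ≠ 0 := zpow_ne_zero _ ht
  field_simp
  push_cast
  ring

section PhaseSpace

variable {G : PhaseP n N → ℝ} {x : PhaseP n N}

def lamPartial (G : PhaseP n N → ℝ) (x : PhaseP n N) (i : Fin n) : ℝ :=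
  deriv (fun t => G (update x.1 i t, x.2.1, x.2.2)) (x.1 i)

def muPartial (G : PhaseP n N → ℝ) (x : PhaseP n N) (i : Fin n) : ℝ :=
  deriv (fun t => G (x.1, update x.2.1 i t, x.2.2)) (x.2.1 i)

lemma XF_eq (H : (Fin n → ℝ) → (Fin n → ℝ) → (Fin N → ℝ) → Fin n → ℝ) (r : Fin n)
    (x : PhaseP n N) :
    XF H r x = (muPartial (fun y => H y.1 y.2.1 y.2.2 r) x,
      -lamPartial (fun y => H y.1 y.2.1 y.2.2 r) x, 0) := rfl

lemma fderiv_apply_eq_sum_partials (hG : DifferentiableAt ℝ G x) (a b : Fin n → ℝ) :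
    fderiv ℝ G x (a, b, 0) = ∑ i, (a i * lamPartial G x i + b i * muPartial G x i) := by
  have hlam : ∀ i, lamPartial G x i = fderiv ℝ G x (Pi.single i 1, 0, 0) := fun i =>
    (hG.hasFDerivAt.comp_hasDerivAt_of_eq (x.1 i)
      ((hasDerivAt_update x.1 i (x.1 i)).prodMk (hasDerivAt_const _ x.2)) (by simp)).deriv
  have hmu : ∀ i, muPartial G x i = fderiv ℝ G x (0, Pi.single i 1, 0) := fun i =>
    (hG.hasFDerivAt.comp_hasDerivAt_of_eq (x.2.1 i) ((hasDerivAt_const _ x.1).prodMk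
      ((hasDerivAt_update x.2.1 i (x.2.1 i)).prodMk (hasDerivAt_const _ x.2.2))) (by simp)).deriv
  have hdecomp : ((a, b, 0) : PhaseP n N)
      = ∑ i, (a i • ((Pi.single i 1, 0, 0) : PhaseP n N) + b i • (0, Pi.single i 1, 0)) := by
    ext <;> simp [Prod.fst_sum, Prod.snd_sum, Pi.single_apply]
  simp only [hlam, hmu, hdecomp, map_sum, map_add, map_smul, smul_eq_mul]

lemma fderiv_apply_XF (hG : DifferentiableAt ℝ G x)
    (H : (Fin n → ℝ) → (Fin n → ℝ) → (Fin N → ℝ) → Fin n → ℝ) (r : Fin n) :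
    fderiv ℝ G x (XF H r x) = ∑ i, (lamPartial G x i * muPartial (fun y => H y.1 y.2.1 y.2.2 r) x i
      - muPartial G x i * lamPartial (fun y => H y.1 y.2.1 y.2.2 r) x i) := by
  rw [XF_eq, fderiv_apply_eq_sum_partials hG]
  congr! 1 with i
  simp only [Pi.neg_apply]
  ring

lemma fderiv_apply_eq_components {F : PhaseP n N → PhaseP n N}
    (h₁ : ∀ i, DifferentiableAt ℝ (fun y => (F y).1 i) x)
    (h₂ : ∀ i, DifferentiableAt ℝ (fun y => (F y).2.1 i) x)
    (h₃ : ∀ k, DifferentiableAt ℝ (fun y => (F y).2.2 k) x) (v : PhaseP n N) :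
    fderiv ℝ F x v = (fun i => fderiv ℝ (fun y => (F y).1 i) x v,
      fun i => fderiv ℝ (fun y => (F y).2.1 i) x v,
      fun k => fderiv ℝ (fun y => (F y).2.2 k) x v) := by
  have hF := (hasFDerivAt_pi.2 fun i => (h₁ i).hasFDerivAt).prodMk
    ((hasFDerivAt_pi.2 fun i => (h₂ i).hasFDerivAt).prodMk
      (hasFDerivAt_pi.2 fun k => (h₃ k).hasFDerivAt))
  rw [hF.fderiv]
  rfl

lemma lamPartial_ham (hx : x.1 ∈ Omega n) (q i : Fin n) :
    lamPartial (fun y => ham f σ s y.1 y.2.1 y.2.2 q) x i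
      = -((vandermondeRev x.1)⁻¹ q i
          * deriv (sepResidual f σ s (ham f σ s x.1 x.2.1 x.2.2) (x.2.1 i) x.2.2) (x.1 i)) :=
  (hasDerivAt_ham_lam hx _ _ q i).deriv

lemma muPartial_ham (q i : Fin n) :
    muPartial (fun y => ham f σ s y.1 y.2.1 y.2.2 q) x i
      = (vandermondeRev x.1)⁻¹ q i * (2 * leval f (x.1 i) * x.1 i ^ (s : ℤ) * x.2.1 i) :=
  (hasDerivAt_ham_mu _ _ _ q i).deriv

lemma differentiableAt_ham_phase (hx : x.1 ∈ Omega n) (q : Fin n) :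
    DifferentiableAt ℝ (fun y : PhaseP n N => ham f σ s y.1 y.2.1 y.2.2 q) x :=
  differentiableAt_ham (by fun_prop) (by fun_prop) (by fun_prop) hx q

lemma fderiv_ham_apply_XF_ham (hx : x.1 ∈ Omega n) (p r : Fin n) :
    fderiv ℝ (fun y => ham f σ s y.1 y.2.1 y.2.2 p) x (XF (ham f σ s) r x) = 0 := by
  rw [fderiv_apply_XF (differentiableAt_ham_phase hx p)]
  simp only [lamPartial_ham hx, muPartial_ham]
  exact sum_eq_zero fun i _ => by ring

lemma XF_congr {H : (Fin n → ℝ) → (Fin n → ℝ) → (Fin N → ℝ) → Fin n → ℝ}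
    (hH : SepSol n N f σ s H) (hx : x.1 ∈ Omega n) (r : Fin n) :
    XF H r x = XF (ham f σ s) r x := by
  rw [XF_eq, XF_eq]
  refine Prod.ext (funext fun i => ?_) (Prod.ext (funext fun i => ?_) rfl)
  · simp only [muPartial, eq_ham_of_sepSol hH hx]
  · exact congrArg Neg.neg <| Filter.EventuallyEq.deriv_eq (by
      filter_upwards [eventually_update_mem_Omega hx i] with t ht
      simp only [eq_ham_of_sepSol hH ht])

lemma Mrs_zero_eq (hn : 1 ≤ n) (H : (Fin n → ℝ) → (Fin n → ℝ) → (Fin N → ℝ) → Fin n → ℝ) :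
    Mrs n N hn 0 s H = fun y =>
      (y.1, fun i => y.1 i ^ (-(s : ℤ)) * y.2.1 i, miuraC s (H y.1 y.2.1 y.2.2) y.2.2) := by
  funext y
  refine Prod.ext rfl (Prod.ext (funext fun i => by simp [Mrs]) (funext fun k => ?_))
  simp only [Mrs, miuraC, extendByZero]
  split_ifs <;> first | rfl | omega | (congr 2; omega)

lemma differentiableAt_miuraC_ham (hx : x.1 ∈ Omega n) (k : Fin N) :
    DifferentiableAt ℝ (fun y : PhaseP n N => miuraC s (ham f σ 0 y.1 y.2.1 y.2.2) y.2.2 k) x := by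
  simp only [miuraC, extendByZero]
  split_ifs
  · exact differentiableAt_ham_phase hx _
  · exact differentiableAt_const _
  · fun_prop

lemma fderiv_miuraC_ham_apply_XF_ham (hx : x.1 ∈ Omega n) (r : Fin n) (k : Fin N) :
    fderiv ℝ (fun y : PhaseP n N => miuraC s (ham f σ 0 y.1 y.2.1 y.2.2) y.2.2 k) x
      (XF (ham f σ 0) r x) = 0 := by
  simp only [miuraC, extendByZero]
  split_ifs
  · exact fderiv_ham_apply_XF_ham hx _ r
  · simp
  · rw [(hasFDerivAt_pi'.1 (hasFDerivAt_snd (𝕜 := ℝ) (p := x)).snd k).fderiv]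
    rfl

lemma fderiv_miura_apply_XF_ham (hn : 1 ≤ n) (hsN : s ≤ N) (hNn : N ≤ n)
    (hx : x.1 ∈ Omega n) (r : Fin n) :
    fderiv ℝ (Mrs n N hn 0 s (ham f σ 0)) x (XF (ham f σ 0) r x)
      = XF (ham f σ s) r (Mrs n N hn 0 s (ham f σ 0) x) := by
  have hlam := hasFDerivAt_pi'.1 (hasFDerivAt_fst (𝕜 := ℝ) (p := x))
  have hmu := hasFDerivAt_pi'.1 (hasFDerivAt_snd (𝕜 := ℝ) (p := x)).fst
  have hzpow : ∀ i, HasDerivAt (fun t : ℝ => t ^ (-(s : ℤ)))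
      ((-(s : ℤ) : ℤ) * x.1 i ^ (-(s : ℤ) - 1)) (x.1 i) := fun i =>
    hasDerivAt_zpow _ _ (Or.inl (hx.1 i))
  have hnu : ∀ i, HasFDerivAt (fun y : PhaseP n N => y.1 i ^ (-(s : ℤ)) * y.2.1 i) _ x := fun i =>
    by exact ((hzpow i).comp_hasFDerivAt x (hlam i)).fun_mul (hmu i)
  rw [Mrs_zero_eq, fderiv_apply_eq_components, XF_eq (ham f σ s)]
  case h₁ => exact fun i => (hlam i).differentiableAt
  case h₂ => exact fun i => (hnu i).differentiableAt
  case h₃ => exact differentiableAt_miuraC_ham hx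
  refine Prod.ext (funext fun i => ?_) (Prod.ext (funext fun i => ?_) (funext fun k => ?_))
  · simp only [(hlam i).fderiv, ContinuousLinearMap.comp_apply, ContinuousLinearMap.coe_fst',
      ContinuousLinearMap.proj_apply, XF_eq, muPartial_ham, Nat.cast_zero, zpow_zero]
    have hinv : x.1 i ^ (s : ℤ) * x.1 i ^ (-(s : ℤ)) = 1 := by
      rw [← zpow_add₀ (hx.1 i), add_neg_cancel, zpow_zero]
    linear_combination (-2 * (vandermondeRev x.1)⁻¹ r i * leval f (x.1 i) * x.2.1 i) * hinv
  · simp only [(hnu i).fderiv, add_apply, smul_apply, ContinuousLinearMap.comp_apply,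
      ContinuousLinearMap.coe_fst', ContinuousLinearMap.coe_snd', ContinuousLinearMap.proj_apply,
      XF_eq, muPartial_ham, lamPartial_ham hx, Pi.neg_apply, Function.comp_apply, smul_eq_mul]
    rw [lamPartial_ham (f := f) (σ := σ) (x := (x.1, fun i => x.1 i ^ (-(s : ℤ)) * x.2.1 i,
      miuraC s (ham f σ 0 x.1 x.2.1 x.2.2) x.2.2)) hx, ham_miura hsN hNn hx,
      deriv_sepResidual_miura hsN hNn (hx.1 i) (sepResidual_ham hx.2 _ _ i)]
    simp only [Nat.cast_zero, zpow_zero]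
    push_cast
    ring
  · exact fderiv_miuraC_ham_apply_XF_ham hx r k

end PhaseSpace

end Staeckel

theorem miura_map_intertwines_vector_fields_general
    (n N : ℕ) (hn : 1 ≤ n) (hNn : N ≤ n)
    (f σ : LaurentPolynomial ℝ) (s : ℕ) (hsN : s ≤ N)
    (H0 Hs : (Fin n → ℝ) → (Fin n → ℝ) → (Fin N → ℝ) → Fin n → ℝ)
    (hH0 : SepSol n N f σ 0 H0) (hHs : SepSol n N f σ s Hs)
    (x : PhaseP n N) (hx : x.1 ∈ Omega n) (r : Fin n) :
    fderiv ℝ (Mrs n N hn 0 s H0) x (XF H0 r x) = XF Hs r (Mrs n N hn 0 s H0 x) := by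
  have hM : Mrs n N hn 0 s H0 =ᶠ[𝓝 x] Mrs n N hn 0 s (Staeckel.ham f σ 0) := by
    filter_upwards [(isOpen_Omega.preimage continuous_fst).mem_nhds hx] with y hy
    simp only [Staeckel.Mrs_zero_eq, Staeckel.eq_ham_of_sepSol hH0 hy]
  rw [hM.fderiv_eq, hM.eq_of_nhds, Staeckel.XF_congr hH0 hx,
    Staeckel.XF_congr (x := Mrs n N hn 0 s (Staeckel.ham f σ 0) x) hHs hx]
  exact Staeckel.fderiv_miura_apply_XF_ham hn hsN hNn hx r

/-- Theorem 1 of the paper: for `s ∈ {1,…,N}`, the differential of the Miura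
map `M_{0→s}` maps the `r`-th Hamiltonian vector field of the curve-0 system to that of the
curve-`s` system: `D M_{0→s}(x) · X_r^{(0)}(x) = X_r^{(s)}(M_{0→s}(x))`. -/
theorem miura_map_intertwines_vector_fields
    (n N : ℕ) (hn : 1 ≤ n) (hN1 : 1 ≤ N) (hNn : N ≤ n)
    (f σ : LaurentPolynomial ℝ) (s : ℕ) (hs1 : 1 ≤ s) (hsN : s ≤ N)
    (H0 Hs : (Fin n → ℝ) → (Fin n → ℝ) → (Fin N → ℝ) → Fin n → ℝ)
    (hH0 : SepSol n N f σ 0 H0) (hHs : SepSol n N f σ s Hs)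
    (x : PhaseP n N) (hx : x.1 ∈ Omega n) (r : Fin n) :
    fderiv ℝ (Mrs n N hn 0 s H0) x (XF H0 r x) = XF Hs r (Mrs n N hn 0 s H0 x) :=
  miura_map_intertwines_vector_fields_general n N hn hNn f σ s hsN H0 Hs hH0 hHs x hx r
end
end

section
/- Let 0 ≤ r < s ≤ N. Then M_{r→s} = M_{0→s} ∘ (M_{0→r})^{−1} as maps Ω × ℝⁿ × ℝᴺ → Ω × ℝⁿ × ℝᴺ, where M_{0→r} is a bijection and M_{0→0} is the identity. -/
/-!
Multiplied by `λ^r`, the curve-`r` separation relation reads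
`σ(λ) + ∑_{k < n+N} a_k λ^k = f(λ) (λ^r μ)²`, where the coefficient list `a` is
`c_1, …, c_r, h_n, …, h_1, c_{r+1}, …, c_N`: every curve is the same polynomial identity, only the
window of `n` unknowns `h` moves. Since `M_{0→r}` replaces `μ` by `λ^{-r} μ`, the curve-`r`
relation at `M_{0→r}(x)` and the curve-`0` relation at `x` have the same right-hand side, and the
choice of `c̄` makes their coefficient lists agree outside the window of the `h^{(r)}`. Evaluated
at the `n` distinct nonzero points `λ_i`, the Vandermonde determinant forces the two lists to be
equal. The composition law and the inverse of `M_{0→r}` are read off from this equality.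
-/

open Finset Function

noncomputable section

def extendZero {R : Type*} [Zero R] {m : ℕ} (v : Fin m → R) (k : ℕ) : R :=
  if h : k < m then v ⟨k, h⟩ else 0

section extendZero

variable {R : Type*} [Zero R] {m : ℕ}

@[simp]
lemma extendZero_val (v : Fin m → R) (j : Fin m) : extendZero v j = v j :=
  dif_pos j.isLt

lemma extendZero_of_le (v : Fin m → R) {k : ℕ} (hk : m ≤ k) : extendZero v k = 0 :=
  dif_neg hk.not_gt

lemma extendZero_injective : Injective (extendZero : (Fin m → R) → ℕ → R) :=
  fun v w h => funext fun j => by simpa using congrFun h j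

end extendZero

/-- The coefficient of `λ^k` in `λ^r` times the left-hand side of the curve-`r` relation, minus
`σ(λ)`. With 0-based indices the `h` occupy the window `[r, r + n)`, in reverse order. -/
def coeffSeq {R : Type*} [Zero R] (n N r : ℕ) (h : Fin n → R) (c : Fin N → R) (k : ℕ) : R :=
  if k < r then extendZero c k
  else if k < n + r then extendZero h (n + r - 1 - k)
  else extendZero c (k - n)

lemma sepSum_mul_zpow_eq_sum_coeffSeq {n N s : ℕ} (hsN : s ≤ N) {t : ℝ} (ht : t ≠ 0)
    (h : Fin n → ℝ) (c : Fin N → ℝ) :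
    ((∑ j : Fin N, if s ≤ (j : ℕ) then c j * t ^ ((n : ℤ) + (j : ℕ) - (s : ℕ))
          else c j * t ^ (((j : ℕ) : ℤ) - (s : ℕ)))
      + ∑ q : Fin n, h q * t ^ ((n : ℤ) - 1 - (q : ℕ))) * t ^ (s : ℤ)
    = ∑ k ∈ range (n + N), coeffSeq n N s h c k * t ^ k := by
  have hpow (a : ℝ) (e : ℤ) (k : ℕ) (hk : e + s = k) : a * t ^ e * t ^ (s : ℤ) = a * t ^ k := by
    rw [mul_assoc, ← zpow_add₀ ht, hk, zpow_natCast]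
  have hc : (∑ j : Fin N, if s ≤ (j : ℕ) then c j * t ^ ((n : ℤ) + (j : ℕ) - (s : ℕ))
          else c j * t ^ (((j : ℕ) : ℤ) - (s : ℕ))) * t ^ (s : ℤ)
      = ∑ j ∈ range s, extendZero c j * t ^ j
        + ∑ j ∈ range (N - s), extendZero c (s + j) * t ^ (n + (s + j)) := by
    set G : ℕ → ℝ := fun j => extendZero c j * t ^ (if s ≤ j then n + j else j)
    calc _ = ∑ j : Fin N, G j := by
          rw [sum_mul]
          refine sum_congr rfl fun j _ => ?_
          simp only [G, extendZero_val]
          split_ifs <;> exact hpow _ _ _ (by omega)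
      _ = ∑ j ∈ range (s + (N - s)), G j := by
          rw [Fin.sum_univ_eq_sum_range, Nat.add_sub_cancel' hsN]
      _ = _ := by
          rw [sum_range_add]
          congr 1
          · refine sum_congr rfl fun j hj => ?_
            simp [G, (mem_range.mp hj).not_ge]
          · simp [G]
  have hh : (∑ q : Fin n, h q * t ^ ((n : ℤ) - 1 - (q : ℕ))) * t ^ (s : ℤ)
      = ∑ q ∈ range n, extendZero h (n - 1 - q) * t ^ (s + q) := by
    rw [← sum_range_reflect, sum_mul, ← Fin.sum_univ_eq_sum_range
      (fun q => extendZero h (n - 1 - (n - 1 - q)) * t ^ (s + (n - 1 - q)))]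
    refine sum_congr rfl fun q _ => ?_
    rw [Nat.sub_sub_self (by omega), extendZero_val]
    exact hpow _ _ _ (by push_cast [Nat.sub_sub]; omega)
  rw [add_mul, hc, hh, show n + N = s + n + (N - s) by omega, sum_range_add, sum_range_add,
    add_right_comm]
  congr 1
  congr 1
  · refine sum_congr rfl fun k hk => ?_
    simp [coeffSeq, mem_range.mp hk]
  · refine sum_congr rfl fun q hq => ?_
    have := mem_range.mp hq
    simp only [coeffSeq, if_neg (show ¬ s + q < s by omega), if_pos (show s + q < n + s by omega)]
    congr 2
    omega
  · refine sum_congr rfl fun j hj => ?_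
    simp only [coeffSeq, if_neg (show ¬ s + n + j < s by omega),
      if_neg (show ¬ s + n + j < n + s by omega)]
    congr 2 <;> omega

lemma coeffSeq_of_lt {R : Type*} [Zero R] {n N r k : ℕ} (h : Fin n → R) (c : Fin N → R)
    (hk : k < r) : coeffSeq n N r h c k = extendZero c k :=
  if_pos hk

lemma coeffSeq_of_le {R : Type*} [Zero R] {n N r k : ℕ} (h : Fin n → R) (c : Fin N → R)
    (hk : n + r ≤ k) : coeffSeq n N r h c k = extendZero c (k - n) := by
  rw [coeffSeq, if_neg (by omega), if_neg (by omega)]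

lemma coeffSeq_add_of_le {R : Type*} [Zero R] {n N r j : ℕ} (h : Fin n → R) (c : Fin N → R)
    (hj : r ≤ j) : coeffSeq n N r h c (n + j) = extendZero c j := by
  rw [coeffSeq_of_le _ _ (by omega), Nat.add_sub_cancel_left]

lemma eq_of_sum_mul_pow_eq_of_eqOn_compl_Ico {R : Type*} [CommRing R] [IsDomain R]
    {n m L : ℕ} {t : Fin n → R} (ht : Injective t) (ht0 : ∀ i, t i ≠ 0) (hmL : m + n ≤ L)
    {a b : ℕ → R} (hsum : ∀ i, ∑ k ∈ range L, a k * t i ^ k = ∑ k ∈ range L, b k * t i ^ k)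
    (hout : Set.EqOn a b (Set.Ico m (m + n))ᶜ) : a = b := by
  have hwin : (fun q : Fin n => a (m + q) - b (m + q)) = 0 := by
    refine Matrix.eq_zero_of_forall_index_sum_mul_pow_eq_zero ht fun i => ?_
    have hdiff : ∑ k ∈ range L, (a k - b k) * t i ^ k = 0 := by
      simp only [sub_mul, sum_sub_distrib, hsum i, sub_self]
    have hsupp : ∑ k ∈ range L, (a k - b k) * t i ^ k
        = t i ^ m * ∑ q : Fin n, (a (m + q) - b (m + q)) * t i ^ (q : ℕ) := by
      rw [← sum_subset (fun k hk => mem_range.mpr ((mem_Ico.mp hk).2.trans_le hmL)),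
        sum_Ico_eq_sum_range, add_tsub_cancel_left, mul_sum,
        Fin.sum_univ_eq_sum_range (fun q => t i ^ m * ((a (m + q) - b (m + q)) * t i ^ q))]
      · exact sum_congr rfl fun q _ => by ring
      · intro k _ hk
        rw [hout fun hk' => hk (mem_Ico.mpr hk'), sub_self, zero_mul]
    rw [hsupp] at hdiff
    exact (mul_eq_zero.mp hdiff).resolve_left (pow_ne_zero _ (ht0 i))
  funext k
  by_cases hk : k ∈ Set.Ico m (m + n)
  · obtain ⟨hmk, hkn⟩ := hk
    have := congrFun hwin ⟨k - m, by omega⟩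
    rwa [Pi.zero_apply, Nat.add_sub_cancel' hmk, sub_eq_zero] at this
  · exact hout hk

lemma SepSol.leval_add_sum_coeffSeq_mul_pow {n N s : ℕ} {f σ : LaurentPolynomial ℝ}
    {H : (Fin n → ℝ) → (Fin n → ℝ) → (Fin N → ℝ) → Fin n → ℝ} (hH : SepSol n N f σ s H)
    (hsN : s ≤ N) {lam : Fin n → ℝ} (hlam : lam ∈ Omega n) (mu : Fin n → ℝ) (c : Fin N → ℝ)
    (i : Fin n) :
    leval σ (lam i) + ∑ k ∈ range (n + N), coeffSeq n N s (H lam mu c) c k * lam i ^ k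
      = leval f (lam i) * (lam i ^ s * mu i) ^ 2 := by
  have ht := hlam.1 i
  rw [← sepSum_mul_zpow_eq_sum_coeffSeq hsN ht]
  have := congrArg (· * lam i ^ (s : ℤ)) (hH lam hlam mu c i)
  simp only [add_mul, mul_assoc, ← zpow_add₀ ht, neg_add_cancel, zpow_zero, mul_one] at this
  rw [add_mul, ← add_assoc, this, zpow_natCast]
  ring

lemma SepSol.coeffSeq_eq {n N r s : ℕ} {f σ : LaurentPolynomial ℝ}
    {Hr Hs : (Fin n → ℝ) → (Fin n → ℝ) → (Fin N → ℝ) → Fin n → ℝ}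
    (hHr : SepSol n N f σ r Hr) (hHs : SepSol n N f σ s Hs) (hrN : r ≤ N) (hsN : s ≤ N)
    {lam : Fin n → ℝ} (hlam : lam ∈ Omega n) {mu mu' : Fin n → ℝ} {c c' : Fin N → ℝ}
    (hmu : ∀ i, lam i ^ r * mu i = lam i ^ s * mu' i)
    (hout : Set.EqOn (coeffSeq n N r (Hr lam mu c) c) (coeffSeq n N s (Hs lam mu' c') c')
      (Set.Ico r (r + n))ᶜ) :
    coeffSeq n N r (Hr lam mu c) c = coeffSeq n N s (Hs lam mu' c') c' := by
  refine eq_of_sum_mul_pow_eq_of_eqOn_compl_Ico (L := n + N) hlam.2 hlam.1 (by omega)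
    (fun i => ?_) hout
  have hr := hHr.leval_add_sum_coeffSeq_mul_pow hrN hlam mu c i
  have hs := hHs.leval_add_sum_coeffSeq_mul_pow hsN hlam mu' c' i
  rw [hmu, ← hs] at hr
  exact add_left_cancel hr

section Miura

variable {n N : ℕ} (hn : 1 ≤ n) {f σ : LaurentPolynomial ℝ} {r : ℕ}
  {H0 Hr : (Fin n → ℝ) → (Fin n → ℝ) → (Fin N → ℝ) → Fin n → ℝ}

lemma extendZero_Mrs_snd_snd {s : ℕ} (hrs : r ≤ s) (hsN : s ≤ N) (hNn : N ≤ n)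
    (H : (Fin n → ℝ) → (Fin n → ℝ) → (Fin N → ℝ) → Fin n → ℝ) (x : PhaseP n N) (k : ℕ) :
    extendZero (Mrs n N hn r s H x).2.2 k
      = if k < s then coeffSeq n N r (H x.1 x.2.1 x.2.2) x.2.2 k else extendZero x.2.2 k := by
  by_cases hkN : k < N
  · lift k to Fin N using hkN
    rw [extendZero_val]
    by_cases hkr : (k : ℕ) < r
    · dsimp only [Mrs]
      rw [dif_neg (by omega), if_pos (by omega), coeffSeq_of_lt _ _ hkr, extendZero_val]
    by_cases hks : (k : ℕ) < s
    · dsimp only [Mrs]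
      rw [dif_pos ⟨by omega, hks⟩, if_pos hks, coeffSeq, if_neg hkr, if_pos (by omega),
        extendZero, dif_pos (by omega)]
      congr 2
      omega
    · dsimp only [Mrs]
      rw [dif_neg (by omega), if_neg hks, extendZero_val]
  · rw [extendZero_of_le _ (not_lt.mp hkN), if_neg (by omega), extendZero_of_le _ (not_lt.mp hkN)]

lemma coeffSeq_Mrs_zero (hrN : r ≤ N) (hNn : N ≤ n) (hH0 : SepSol n N f σ 0 H0)
    (hHr : SepSol n N f σ r Hr) {x : PhaseP n N} (hx : x.1 ∈ Omega n) :
    coeffSeq n N r (Hr (Mrs n N hn 0 r H0 x).1 (Mrs n N hn 0 r H0 x).2.1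
        (Mrs n N hn 0 r H0 x).2.2) (Mrs n N hn 0 r H0 x).2.2
      = coeffSeq n N 0 (H0 x.1 x.2.1 x.2.2) x.2.2 := by
  have hc := extendZero_Mrs_snd_snd hn (Nat.zero_le r) hrN hNn H0 x
  refine hHr.coeffSeq_eq hH0 hrN (Nat.zero_le N) hx (fun i => ?_) (fun k hk => ?_)
  · dsimp only [Mrs]
    rw [← zpow_natCast, ← mul_assoc, ← zpow_add₀ (hx.1 i)]
    simp
  · rcases lt_or_ge k r with hkr | hkr
    · rw [coeffSeq_of_lt _ _ hkr, hc, if_pos hkr]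
    · have hnk : n + r ≤ k := by
        simp only [Set.mem_compl_iff, Set.mem_Ico, not_and, not_lt] at hk; omega
      rw [coeffSeq_of_le _ _ hnk, hc, if_neg (by omega), coeffSeq_of_le _ _ (by omega)]

lemma Mrs_zero_injOn (hrN : r ≤ N) (hNn : N ≤ n) (hH0 : SepSol n N f σ 0 H0)
    (hHr : SepSol n N f σ r Hr) :
    Set.InjOn (Mrs n N hn 0 r H0) {x | x.1 ∈ Omega n} := by
  intro x hx y hy hxy
  have hlam : x.1 = y.1 := congrArg (·.1) hxy
  have hmu : x.2.1 = y.2.1 := funext fun i => by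
    have hi := congrFun (congrArg (·.2.1) hxy) i
    dsimp only [Mrs] at hi
    rw [hlam] at hi
    exact mul_left_cancel₀ (zpow_ne_zero _ (hy.1 i)) hi
  have hcoeff := coeffSeq_Mrs_zero hn hrN hNn hH0 hHr hx
  rw [hxy, coeffSeq_Mrs_zero hn hrN hNn hH0 hHr hy] at hcoeff
  have hc : x.2.2 = y.2.2 := extendZero_injective <| funext fun j => by
    rw [← coeffSeq_add_of_le (H0 x.1 x.2.1 x.2.2) _ (Nat.zero_le j), ← hcoeff,
      coeffSeq_add_of_le _ _ (Nat.zero_le j)]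
  exact Prod.ext hlam (Prod.ext hmu hc)

lemma Mrs_zero_surjOn (hrN : r ≤ N) (hNn : N ≤ n) (hH0 : SepSol n N f σ 0 H0)
    (hHr : SepSol n N f σ r Hr) :
    Set.SurjOn (Mrs n N hn 0 r H0) {x | x.1 ∈ Omega n} {x | x.1 ∈ Omega n} := by
  intro y hy
  set a := coeffSeq n N r (Hr y.1 y.2.1 y.2.2) y.2.2
  set x : PhaseP n N := (y.1, fun i => y.1 i ^ r * y.2.1 i, fun j => a (n + j))
  have hxc : extendZero x.2.2 = fun k => a (n + k) := funext fun k => by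
    rcases lt_or_ge k N with hkN | hkN
    · lift k to Fin N using hkN
      exact extendZero_val _ k
    · rw [extendZero_of_le _ hkN]
      exact ((coeffSeq_add_of_le _ _ (hrN.trans hkN)).trans (extendZero_of_le _ hkN)).symm
  have hcoeff : coeffSeq n N 0 (H0 x.1 x.2.1 x.2.2) x.2.2 = a := by
    refine hH0.coeffSeq_eq hHr (Nat.zero_le N) hrN hy (fun i => by simp [x]) (fun k hk => ?_)
    have hnk : n ≤ k := by
      simp only [Set.mem_compl_iff, Set.mem_Ico, not_and, not_lt] at hk; omega
    rw [coeffSeq_of_le _ _ (by omega), hxc]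
    exact congrArg a (Nat.add_sub_cancel' hnk)
  refine ⟨x, hy, Prod.ext rfl
    (Prod.ext (funext fun i => ?_) (extendZero_injective (funext fun k => ?_)))⟩
  · dsimp only [Mrs, x]
    rw [← zpow_natCast, ← mul_assoc, ← zpow_add₀ (hy.1 i)]
    simp
  · rw [extendZero_Mrs_snd_snd hn (Nat.zero_le r) hrN hNn, hcoeff, hxc]
    split_ifs with hk
    · exact coeffSeq_of_lt _ _ hk
    · exact coeffSeq_add_of_le _ _ (not_lt.mp hk)

lemma Mrs_comp_Mrs_zero {s : ℕ} (hrs : r ≤ s) (hsN : s ≤ N) (hNn : N ≤ n)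
    (hH0 : SepSol n N f σ 0 H0) (hHr : SepSol n N f σ r Hr) {x : PhaseP n N}
    (hx : x.1 ∈ Omega n) : Mrs n N hn r s Hr (Mrs n N hn 0 r H0 x) = Mrs n N hn 0 s H0 x := by
  have hrN := hrs.trans hsN
  refine Prod.ext rfl (Prod.ext (funext fun i => ?_) (extendZero_injective (funext fun k => ?_)))
  · dsimp only [Mrs]
    rw [← mul_assoc, ← zpow_add₀ (hx.1 i)]
    congr 2
    ring
  · rw [extendZero_Mrs_snd_snd hn hrs hsN hNn, extendZero_Mrs_snd_snd hn (Nat.zero_le s) hsN hNn,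
      coeffSeq_Mrs_zero hn hrN hNn hH0 hHr hx, extendZero_Mrs_snd_snd hn (Nat.zero_le r) hrN hNn]
    split_ifs <;> first | rfl | omega

end Miura

theorem miura_map_composition_general
    (n N : ℕ) (hn : 1 ≤ n) (hNn : N ≤ n)
    (f σ : LaurentPolynomial ℝ) (r s : ℕ) (hrs : r < s) (hsN : s ≤ N)
    (H0 Hr : (Fin n → ℝ) → (Fin n → ℝ) → (Fin N → ℝ) → Fin n → ℝ)
    (hH0 : SepSol n N f σ 0 H0) (hHr : SepSol n N f σ r Hr) :
    Set.BijOn (Mrs n N hn 0 r H0)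
        {x : PhaseP n N | x.1 ∈ Omega n} {x : PhaseP n N | x.1 ∈ Omega n}
    ∧ ∀ x : PhaseP n N, x.1 ∈ Omega n →
        Mrs n N hn r s Hr (Mrs n N hn 0 r H0 x) = Mrs n N hn 0 s H0 x := by
  have hrN : r ≤ N := hrs.le.trans hsN
  exact ⟨⟨fun _ hx => hx, Mrs_zero_injOn hn hrN hNn hH0 hHr, Mrs_zero_surjOn hn hrN hNn hH0 hHr⟩,
    fun _ hx => Mrs_comp_Mrs_zero hn hrs.le hsN hNn hH0 hHr hx⟩

/-- for `0 ≤ r < s ≤ N`, `M_{r→s} = M_{0→s} ∘ (M_{0→r})⁻¹` as maps of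
`Ω × ℝⁿ × ℝᴺ`, where `M_{0→r}` is a bijection of `Ω × ℝⁿ × ℝᴺ` onto itself (and `M_{0→0}`
is the identity).  Equivalently (composing with the bijection `M_{0→r}`):
`M_{r→s} ∘ M_{0→r} = M_{0→s}` on `Ω × ℝⁿ × ℝᴺ`. -/
theorem miura_map_composition
    (n N : ℕ) (hn : 1 ≤ n) (hN1 : 1 ≤ N) (hNn : N ≤ n)
    (f σ : LaurentPolynomial ℝ) (r s : ℕ) (hrs : r < s) (hsN : s ≤ N)
    (H0 Hr : (Fin n → ℝ) → (Fin n → ℝ) → (Fin N → ℝ) → Fin n → ℝ)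
    (hH0 : SepSol n N f σ 0 H0) (hHr : SepSol n N f σ r Hr) :
    Set.BijOn (Mrs n N hn 0 r H0)
        {x : PhaseP n N | x.1 ∈ Omega n} {x : PhaseP n N | x.1 ∈ Omega n}
    ∧ ∀ x : PhaseP n N, x.1 ∈ Omega n →
        Mrs n N hn r s Hr (Mrs n N hn 0 r H0 x) = Mrs n N hn 0 s H0 x :=
  miura_map_composition_general n N hn hNn f σ r s hrs hsN H0 Hr hH0 hHr
end
end
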